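/- arXiv:2510.08860 — 8 statements merged into one kernel-verified Lean document; each statement's English description precedes it below -/
import Mathlib

section
/- Let κ ≤ λ < μ be infinite cardinals. If KH(κ,λ) fails and KH(κ,μ) holds, then KH(λ⁺,μ) holds. That is, if there is no slim (κ,λ)-family of cardinality λ⁺ but there is a slim (κ,μ)-family of cardinality μ⁺, then there is a slim (λ⁺,μ)-family of cardinality μ⁺. -/
open Cardinal

universe u

/-- `F` is a slim `(κ, ·)`-family of subsets of `L`: for every `x ⊆ L` of cardinality `< κ`,
the set of restrictions `{A ∩ x : A ∈ F}` has cardinality `< κ`. -/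
def SlimFamily (κ : Cardinal.{u}) {L : Type u} (F : Set (Set L)) : Prop :=
  ∀ x : Set L, #x < κ → #((fun A => A ∩ x) '' F) < κ

/-- `KH κ λ μ`: there is a slim `(κ, λ)`-family of cardinality `μ`, where subsets of the
cardinal `λ` are represented as subsets of the canonical type `λ.ord.toType` of cardinality
`λ`. -/
def KH (κ lam μ : Cardinal.{u}) : Prop :=
  ∃ F : Set (Set lam.ord.ToType), SlimFamily κ F ∧ #F = μ

/-!
If the `(κ, μ)`-slim family `F` of size `μ⁺` were not `(λ⁺, μ)`-slim, some `x` of size `≤ λ`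
would carry at least `λ⁺` traces `A ∩ x`. Slimness passes to subfamilies, to preimages along any
map and to images along injections, so `λ⁺` of these traces, copied into `λ` along an injection `x ↪ λ`,
would form a slim `(κ, λ)`-family of size `λ⁺`.
-/

namespace SlimFamily

variable {κ : Cardinal.{u}} {α β : Type u}

theorem mono {F G : Set (Set α)} (hF : SlimFamily κ F) (hGF : G ⊆ F) : SlimFamily κ G :=
  fun x hx => (mk_le_mk_of_subset (Set.image_mono hGF)).trans_lt (hF x hx)

theorem preimage {F : Set (Set β)} (hF : SlimFamily κ F) (g : α → β) :
    SlimFamily κ (Set.preimage g '' F) := by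
  intro z hz
  have htrace : (fun B => B ∩ z) '' (Set.preimage g '' F)
      = (fun C => g ⁻¹' C ∩ z) '' ((fun A => A ∩ g '' z) '' F) := by
    simp only [Set.image_image, Set.preimage_inter, Set.inter_assoc,
      Set.inter_eq_right.mpr (Set.subset_preimage_image g z)]
  rw [htrace]
  exact mk_image_le.trans_lt (hF _ (mk_image_le.trans_lt hz))

theorem image {F : Set (Set α)} (hF : SlimFamily κ F) {f : α → β}
    (hf : Function.Injective f) : SlimFamily κ (Set.image f '' F) := by
  intro z hz
  have htrace : (fun B => B ∩ z) '' (Set.image f '' F)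
      = Set.image f '' ((fun A => A ∩ f ⁻¹' z) '' F) := by
    simp only [Set.image_image, Set.image_inter_preimage]
  rw [htrace]
  exact mk_image_le.trans_lt (hF _ ((mk_preimage_of_injective f z hf).trans_lt hz))

end SlimFamily

theorem mk_image_preimage_val_eq_mk_image_inter {β : Type u} (F : Set (Set β)) (x : Set β) :
    #(Set.preimage ((↑) : x → β) '' F) = #((fun A => A ∩ x) '' F) := by
  have hinj : Set.InjOn (Set.preimage ((↑) : x → β)) ((fun A => A ∩ x) '' F) := by
    rintro _ ⟨A, -, rfl⟩ _ ⟨B, -, rfl⟩ hAB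
    simpa only [Set.inter_comm x, Set.inter_assoc, Set.inter_self] using
      Subtype.preimage_coe_eq_preimage_coe_iff.mp hAB
  rw [← mk_image_eq_of_injOn _ _ hinj, Set.image_image]
  simp only [Subtype.preimage_coe_inter_self]

theorem KH_of_slimFamily {κ lam ν : Cardinal.{u}} {L : Type u} {F : Set (Set L)}
    (hF : SlimFamily κ F) (hL : #L ≤ lam) (hν : ν ≤ #F) : KH κ lam ν := by
  obtain ⟨G, hGF, rfl⟩ := le_mk_iff_exists_subset.mp hν
  obtain ⟨f⟩ : Nonempty (L ↪ lam.ord.ToType) := by rwa [← le_def, mk_ord_toType]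
  exact ⟨Set.image f '' G, (hF.mono hGF).image f.injective,
    mk_image_eq_of_injOn _ _ (Set.image_injective.mpr f.injective).injOn⟩

theorem stmt0_general (κ lam μ : Cardinal.{u})
    (h1 : ¬ KH κ lam (Order.succ lam)) (h2 : KH κ μ (Order.succ μ)) :
    KH (Order.succ lam) μ (Order.succ μ) := by
  obtain ⟨F, hF, hFcard⟩ := h2
  refine ⟨F, fun x hx => ?_, hFcard⟩
  by_contra! htraces
  rw [← mk_image_preimage_val_eq_mk_image_inter] at htraces
  exact h1 (KH_of_slimFamily (hF.preimage _) (Order.lt_succ_iff.mp hx) htraces)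

/-- If `κ ≤ λ < μ` are infinite cardinals, `KH(κ,λ)` fails and `KH(κ,μ)` holds, then
`KH(λ⁺,μ)` holds. -/
theorem stmt0 (κ lam μ : Cardinal.{u}) (hκ : ℵ₀ ≤ κ) (hkl : κ ≤ lam) (hlm : lam < μ)
    (h1 : ¬ KH κ lam (Order.succ lam)) (h2 : KH κ μ (Order.succ μ)) :
    KH (Order.succ lam) μ (Order.succ μ) :=
  stmt0_general κ lam μ h1 h2
end

section
/- Let κ ≤ λ be uncountable cardinals and μ a cardinal. Then KH(κ,λ,μ) holds if and only if there exists a slim (κ,λ)-tree with at least μ branches. -/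
open Cardinal

universe u

/-!
Identify a set `A ⊆ λ` with its characteristic function `λ → Bool`. Restricting the
characteristic functions of the members of a family `F` to each small `x` gives a tree whose
level `x` is in bijection with `F ↾ x` (after adding `∅`, so that no level is empty), hence
slim when `F` is, and every member of `F` is a branch. Conversely, for any set `P` of branches
of a slim tree, `{b = true} ∩ x` is determined by the node `b ↾ x`, so the supports of `P`
form a slim family of cardinality `#P`.
-/

section

variable {L : Type u} {κ : Cardinal.{u}}

structure IsSlimTree (κ : Cardinal.{u}) (T : (x : Set L) → Set (x → Bool)) : Prop where
  nonempty : ∀ x : Set L, #x < κ → (T x).Nonempty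
  restrict_mem : ∀ x y : Set L, #y < κ → ∀ hxy : x ⊆ y, ∀ s ∈ T y,
    (fun a : x => s ⟨a.1, hxy a.2⟩) ∈ T x
  card_lt : ∀ x : Set L, #x < κ → #(T x) < κ

def branches (κ : Cardinal.{u}) (T : (x : Set L) → Set (x → Bool)) : Set (L → Bool) :=
  {b | ∀ x : Set L, #x < κ → x.domRestrict b ∈ T x}

open Classical in
noncomputable def familyTree (F : Set (Set L)) (x : Set L) : Set (x → Bool) :=
  (fun A => x.domRestrict fun a => decide (a ∈ A)) '' insert ∅ F

open Classical in
theorem card_familyTree_le (F : Set (Set L)) (x : Set L) :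
    #(familyTree F x) ≤ #((· ∩ x) '' F) + 1 := by
  have hfactor : familyTree F x =
      (fun S => x.domRestrict fun a => decide (a ∈ S)) '' ((· ∩ x) '' insert ∅ F) := by
    rw [familyTree, ← Set.image_comp]
    refine Set.image_congr fun A _ => funext fun a => ?_
    simp [a.2]
  rw [hfactor, Set.image_insert_eq, Set.empty_inter]
  exact mk_image_le.trans mk_insert_le

theorem SlimFamily.isSlimTree_familyTree {F : Set (Set L)} (hF : SlimFamily κ F)
    (hκ : ℵ₀ ≤ κ) : IsSlimTree κ (familyTree F) where
  nonempty _ _ := ⟨_, Set.mem_image_of_mem _ (Set.mem_insert _ _)⟩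
  restrict_mem := by
    rintro x y - hxy _ ⟨A, hA, rfl⟩
    exact ⟨A, hA, rfl⟩
  card_lt x hx :=
    (card_familyTree_le F x).trans_lt (add_lt_of_lt hκ (hF x hx) (one_lt_aleph0.trans_le hκ))

open Classical in
theorem card_le_card_branches_familyTree (F : Set (Set L)) :
    #F ≤ #(branches κ (familyTree F)) := by
  refine mk_le_of_injective (f := fun A : F => ⟨fun a => decide (a ∈ A.1),
    fun x _ => ⟨A, Set.mem_insert_of_mem _ A.2, rfl⟩⟩) fun A B hAB => ?_
  exact Subtype.ext <| Set.ext fun a => by simpa using congrFun (congrArg Subtype.val hAB) a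

theorem card_image_preimage_true (P : Set (L → Bool)) : #((· ⁻¹' {true}) '' P) = #P :=
  mk_image_eq fun _ _ hbc => funext fun a => Bool.eq_iff_iff.2 (Set.ext_iff.1 hbc a)

theorem slimFamily_image_preimage_true {T : (x : Set L) → Set (x → Bool)}
    (hT : ∀ x : Set L, #x < κ → #(T x) < κ) {P : Set (L → Bool)} (hP : P ⊆ branches κ T) :
    SlimFamily κ ((· ⁻¹' {true}) '' P) := by
  intro x hx
  have hfactor : (· ∩ x) '' ((· ⁻¹' {true}) '' P) =
      (fun s : x → Bool => Subtype.val '' (s ⁻¹' {true})) '' (x.domRestrict '' P) := by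
    rw [← Set.image_comp, ← Set.image_comp]
    refine Set.image_congr fun b _ => ?_
    rw [Function.comp_apply, Set.inter_comm]
    exact (Subtype.image_preimage_coe x _).symm
  rw [hfactor]
  exact mk_image_le.trans_lt <|
    (mk_le_mk_of_subset (Set.image_subset_iff.2 fun b hb => hP hb x hx)).trans_lt (hT x hx)

end

theorem stmt7_general (κ lam μ : Cardinal.{u}) (hκ : ℵ₀ < κ) :
    KH κ lam μ ↔
    ∃ F : (x : Set lam.ord.ToType) → Set (↥x → Bool),
      (∀ x : Set lam.ord.ToType, #x < κ → (F x).Nonempty) ∧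
      (∀ x y : Set lam.ord.ToType, #y < κ → ∀ hxy : x ⊆ y, ∀ s ∈ F y,
        (fun a : ↥x => s ⟨a.1, hxy a.2⟩) ∈ F x) ∧
      (∀ x : Set lam.ord.ToType, #x < κ → #(F x) < κ) ∧
      μ ≤ #{b : lam.ord.ToType → Bool |
        ∀ x : Set lam.ord.ToType, #x < κ → (fun a : ↥x => b a.1) ∈ F x} := by
  constructor
  · rintro ⟨F, hF, rfl⟩
    obtain ⟨hne, hrestr, hcard⟩ := hF.isSlimTree_familyTree hκ.le
    exact ⟨familyTree F, hne, hrestr, hcard, card_le_card_branches_familyTree F⟩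
  · rintro ⟨T, -, -, hcard, hμ⟩
    obtain ⟨P, hPT, rfl⟩ := le_mk_iff_exists_subset.1 hμ
    exact ⟨_, slimFamily_image_preimage_true hcard hPT, card_image_preimage_true P⟩

/-- For uncountable cardinals `κ ≤ λ` and any cardinal `μ`, `KH(κ,λ,μ)` holds iff there is
a slim `(κ,λ)`-tree with at least `μ` branches. A `(κ,λ)`-tree assigns to each `x ⊆ λ`
with `|x| < κ` a nonempty set `F x` of functions `x → 2`, downward closed under
restriction; it is slim if `|F x| < κ` for all such `x`; a branch is a `b : λ → 2` all of
whose restrictions to small sets lie in the tree. -/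
theorem stmt7 (κ lam μ : Cardinal.{u}) (hκ : ℵ₀ < κ) (hkl : κ ≤ lam) :
    KH κ lam μ ↔
    ∃ F : (x : Set lam.ord.ToType) → Set (↥x → Bool),
      (∀ x : Set lam.ord.ToType, #x < κ → (F x).Nonempty) ∧
      (∀ x y : Set lam.ord.ToType, #y < κ → ∀ hxy : x ⊆ y, ∀ s ∈ F y,
        (fun a : ↥x => s ⟨a.1, hxy a.2⟩) ∈ F x) ∧
      (∀ x : Set lam.ord.ToType, #x < κ → #(F x) < κ) ∧
      μ ≤ #{b : lam.ord.ToType → Bool |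
        ∀ x : Set lam.ord.ToType, #x < κ → (fun a : ↥x => b a.1) ∈ F x} :=
  stmt7_general κ lam μ hκ
end

section
/- Let κ and λ be infinite cardinals with κ⁺ ≤ λ. If the Chang transfer property (λ⁺,λ) ↠ (κ⁺,κ) holds for the language with one unary relation symbol and one binary relation symbol, then KH(κ⁺,λ) fails: there is no slim (κ⁺,λ)-family of cardinality λ⁺. -/
open Cardinal FirstOrder

universe u

/-- The first-order language with one unary relation symbol and one binary relation
symbol (and no function symbols). -/
def LangUE : FirstOrder.Language :=
  { Functions := fun _ => Empty
    Relations := fun n => match n with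
      | 1 => Unit
      | 2 => Unit
      | _ => Empty }

/-- The unary relation symbol `U` of `LangUE`. -/
def USymb : LangUE.Relations 1 := Unit.unit

/-- The Chang transfer property `(λ⁺,λ) ↠ (κ⁺,κ)` for the language `LangUE`: every
`LangUE`-structure `M` with `|M| = λ⁺` and `|U^M| = λ` has an elementary substructure `N`
with `|N| = κ⁺` and `|U^M ∩ N| = κ`. -/
def ChangTransfer (κ lam : Cardinal.{u}) : Prop :=
  ∀ (M : Type u) (_ : LangUE.Structure M),
    #M = Order.succ lam →
    #{m : M | Language.Structure.RelMap USymb ![m]} = lam →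
    ∃ N : LangUE.ElementarySubstructure M,
      #(N.toSubstructure : Set M) = Order.succ κ ∧
      #((N.toSubstructure : Set M) ∩ {m : M | Language.Structure.RelMap USymb ![m]} :
        Set M) = κ

/-!
Code a family `F` of subsets of `L` as the structure `F ⊕ L` with `U = L` and `E` the membership
relation. A Chang substructure `N` has `κ⁺` points but meets `L` only in a set `x` of size `κ`,
so it contains `κ⁺` members of `F`. Any two distinct members of `F` are separated by a point of
`U`, and by elementarity already by one in `N`, i.e. in `x`; hence `A ↦ A ∩ x` is injective on
those `κ⁺` members and `F` is not slim at `x`.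
-/

open Language Structure Set

def ESymb : LangUE.Relations 2 := Unit.unit

section Separation

variable {M : Type*} [LangUE.Structure M]

def Separates (c a b : M) : Prop :=
  RelMap USymb ![c] ∧ ¬(RelMap ESymb ![a, c] ↔ RelMap ESymb ![b, c])

theorem FirstOrder.Language.Substructure.separates_coe {S : LangUE.Substructure M} (c a b : S) :
    Separates c a b ↔ Separates (c : M) a b := by
  have h₁ : (fun i => ((![c] i : S) : M)) = ![(c : M)] := by simp [funext_iff]
  have h₂ (x : S) : (fun i => ((![x, c] i : S) : M)) = ![(x : M), c] := by
    simp [funext_iff, Fin.forall_fin_two]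
  have hrel {n} (r : LangUE.Relations n) (v : Fin n → S) :
      RelMap r v ↔ RelMap r fun i => (v i : M) := Iff.rfl
  simp only [Separates, hrel, h₁, h₂]

def separatingFormula : LangUE.Formula (Fin 2) :=
  BoundedFormula.ex
    ((USymb.boundedFormula₁ (Term.var (Sum.inr 0))) ⊓
      ∼(BoundedFormula.iff
          (ESymb.boundedFormula₂ (Term.var (Sum.inl 0)) (Term.var (Sum.inr 0)))
          (ESymb.boundedFormula₂ (Term.var (Sum.inl 1)) (Term.var (Sum.inr 0)))))

theorem realize_separatingFormula (a b : M) :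
    separatingFormula.Realize ![a, b] ↔ ∃ c, Separates c a b := by
  simp only [separatingFormula, Separates, Formula.Realize, BoundedFormula.realize_ex,
    BoundedFormula.realize_inf, BoundedFormula.realize_not, BoundedFormula.realize_iff,
    BoundedFormula.realize_rel₁, BoundedFormula.realize_rel₂, Term.realize_var, Sum.elim_inl,
    Sum.elim_inr, Fin.snoc_zero, Matrix.cons_val_zero, Matrix.cons_val_one]

theorem FirstOrder.Language.Substructure.IsElementary.exists_mem_separates
    {S : LangUE.Substructure M} (hS : S.IsElementary) {a b : M} (ha : a ∈ S) (hb : b ∈ S)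
    (h : ∃ c, Separates c a b) :
    ∃ c ∈ S, Separates c a b := by
  have hab : ((↑) : S → M) ∘ ![⟨a, ha⟩, ⟨b, hb⟩] = ![a, b] := by
    simp [funext_iff, Fin.forall_fin_two]
  have hrealize := hS separatingFormula ![⟨a, ha⟩, ⟨b, hb⟩]
  rw [hab, realize_separatingFormula, realize_separatingFormula] at hrealize
  obtain ⟨c, hc⟩ := hrealize.1 h
  exact ⟨c, c.2, (separates_coe c _ _).1 hc⟩

end Separation

theorem Cardinal.mk_preimage_inl_add_mk_preimage_inr {α β : Type u} (s : Set (α ⊕ β)) :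
    #(Sum.inl ⁻¹' s) + #(Sum.inr ⁻¹' s) = #s := by
  conv_rhs => rw [← image_preimage_inl_union_image_preimage_inr s]
  rw [mk_union_of_disjoint disjoint_image_inl_image_inr, mk_image_eq Sum.inl_injective,
    mk_image_eq Sum.inr_injective]

section Membership

variable {L : Type u} (F : Set (Set L))

abbrev membershipStructure : LangUE.Structure (F ⊕ L) where
  funMap f _ := Empty.elim f
  RelMap {n} _ := match n with
    | 1 => fun v => v 0 ∈ range Sum.inr
    | 2 => fun v => ∃ (A : F) (z : L), v 0 = Sum.inl A ∧ v 1 = Sum.inr z ∧ z ∈ (A : Set L)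
    | _ => fun _ => False

attribute [local instance] membershipStructure

theorem setOf_relMap_USymb : {m : F ⊕ L | RelMap USymb ![m]} = range Sum.inr := rfl

variable {F}

theorem separates_inl_inl_iff {c : F ⊕ L} {A B : F} :
    Separates c (Sum.inl A) (Sum.inl B) ↔
      ∃ z, c = Sum.inr z ∧ ¬(z ∈ (A : Set L) ↔ z ∈ (B : Set L)) := by
  have hE (A : F) (z : L) : RelMap ESymb ![Sum.inl A, Sum.inr z] ↔ z ∈ (A : Set L) := by
    change (∃ A' z', _) ↔ _
    simp
  constructor
  · rintro ⟨⟨z, rfl⟩, h⟩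
    exact ⟨z, rfl, by rwa [hE, hE] at h⟩
  · rintro ⟨z, rfl, h⟩
    exact ⟨⟨z, rfl⟩, by rwa [hE, hE]⟩

theorem injOn_inter_preimage_inr {N : LangUE.Substructure (F ⊕ L)} (hN : N.IsElementary) :
    InjOn (fun A : F => (A : Set L) ∩ Sum.inr ⁻¹' (N : Set (F ⊕ L)))
      (Sum.inl ⁻¹' (N : Set (F ⊕ L))) := by
  intro A hA B hB hAB
  by_contra hne
  obtain ⟨z, hz⟩ : ∃ z, ¬(z ∈ (A : Set L) ↔ z ∈ (B : Set L)) := by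
    by_contra! h
    exact hne (Subtype.ext (Set.ext h))
  obtain ⟨c, hcN, hc⟩ :=
    hN.exists_mem_separates hA hB ⟨Sum.inr z, separates_inl_inl_iff.2 ⟨z, rfl, hz⟩⟩
  obtain ⟨w, rfl, hw⟩ := separates_inl_inl_iff.1 hc
  have hwAB := congrArg (w ∈ ·) hAB
  simp only [mem_inter_iff, mem_preimage, SetLike.mem_coe, hcN, and_true, eq_iff_iff] at hwAB
  exact hw hwAB

theorem not_slimFamily_of_changTransfer {κ lam : Cardinal.{u}} (hκ : ℵ₀ ≤ κ) (hlam : ℵ₀ ≤ lam)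
    (hchang : ChangTransfer κ lam) (hL : #L = lam) (hF : #F = Order.succ lam) :
    ¬ SlimFamily (Order.succ κ) F := by
  intro hslim
  have hM : #(F ⊕ L) = Order.succ lam := by
    rw [mk_sum, lift_id, lift_id, hF, hL]
    exact add_eq_left (hlam.trans (Order.le_succ lam)) (Order.le_succ lam)
  have hU : #{m : F ⊕ L | RelMap USymb ![m]} = lam := by
    rw [setOf_relMap_USymb, mk_range_eq _ Sum.inr_injective, hL]
  obtain ⟨N, hN, hNU⟩ := hchang _ (membershipStructure F) hM hU
  set x : Set L := Sum.inr ⁻¹' (N.toSubstructure : Set (F ⊕ L))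
  set G : Set F := Sum.inl ⁻¹' (N.toSubstructure : Set (F ⊕ L))
  have hx : #x = κ := by
    rw [← hNU, setOf_relMap_USymb, ← image_preimage_eq_inter_range,
      mk_image_eq Sum.inr_injective]
  have hxlt : #x < Order.succ κ := hx ▸ Order.lt_succ #x
  have hG : Order.succ κ ≤ #G := by
    by_contra! hG
    have hlt := add_lt_of_lt (hκ.trans (Order.le_succ κ)) hG hxlt
    rw [mk_preimage_inl_add_mk_preimage_inr, hN] at hlt
    exact hlt.false
  have hGx : (fun A : F => (A : Set L) ∩ x) '' G ⊆ (fun A => A ∩ x) '' F := by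
    rintro _ ⟨A, -, rfl⟩
    exact ⟨A, A.2, rfl⟩
  have hrestrict : Order.succ κ ≤ #((fun A => A ∩ x) '' F) :=
    calc Order.succ κ ≤ #G := hG
      _ = #((fun A : F => (A : Set L) ∩ x) '' G) :=
        (mk_image_eq_of_injOn _ _ (injOn_inter_preimage_inr N.isElementary)).symm
      _ ≤ #((fun A => A ∩ x) '' F) := mk_le_mk_of_subset hGx
  exact (hslim x hxlt).not_ge hrestrict

end Membership

/-- If `κ` is infinite, `κ⁺ ≤ λ`, and the Chang transfer property `(λ⁺,λ) ↠ (κ⁺,κ)`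
holds, then `KH(κ⁺,λ)` fails: there is no slim `(κ⁺,λ)`-family of cardinality `λ⁺`.
Subsets of `λ` are represented as subsets of the canonical type `λ.ord.toType`. -/
theorem stmt8 (κ lam : Cardinal.{u}) (hκ : ℵ₀ ≤ κ) (hkl : Order.succ κ ≤ lam)
    (hchang : ChangTransfer κ lam) :
    ¬ ∃ F : Set (Set lam.ord.ToType),
        SlimFamily (Order.succ κ) F ∧ #F = Order.succ lam := by
  rintro ⟨F, hslim, hF⟩
  have hlam : ℵ₀ ≤ lam := hκ.trans ((Order.le_succ κ).trans hkl)
  exact not_slimFamily_of_changTransfer hκ hlam hchang (mk_ord_toType lam) hF hslim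
end

section
/- Let n < ω and let A ⊆ ω be infinite. Suppose (f_α : α < ℵ_{ω+1}) is a scale on ∏_{k∈A} ℵ_k such that every ordinal α < ℵ_{ω+1} with cf(α) = ℵ_{n+1} is good for the scale. Then KH(ℵ_{n+1}, ℵ_ω) holds: there exists a slim (ℵ_{n+1}, ℵ_ω)-family of cardinality ℵ_{ω+1}. -/
open Cardinal Ordinal

universe u

/-- `f` is a member of `∏_{k ∈ A} ℵ_k`: `f k < ℵ_k` for every `k ∈ A`
(values off `A` are irrelevant). -/
def MemPiAleph (A : Set ℕ) (f : ℕ → Ordinal.{u}) : Prop :=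
  ∀ k ∈ A, f k < (aleph k).ord

/-- `f <* g`: `f k < g k` for all but finitely many `k ∈ A`. -/
def LtStar (A : Set ℕ) (f g : ℕ → Ordinal.{u}) : Prop :=
  {k ∈ A | ¬ f k < g k}.Finite

/-- `(f α : α < ℵ_{ω+1})` is a scale on `∏_{k ∈ A} ℵ_k`: each `f α` is a member of the
product, the sequence is `<*`-increasing, and it is `<*`-cofinal in the product. -/
def IsScale (A : Set ℕ) (f : Ordinal.{u} → ℕ → Ordinal.{u}) : Prop :=
  (∀ α < (aleph (omega0 + 1)).ord, MemPiAleph A (f α)) ∧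
  (∀ α β : Ordinal.{u}, α < β → β < (aleph (omega0 + 1)).ord → LtStar A (f α) (f β)) ∧
  (∀ g : ℕ → Ordinal.{u}, MemPiAleph A g →
    ∃ α < (aleph (omega0 + 1)).ord, LtStar A g (f α))

/-- `α` is a good point for the scale `f`: for every `C` unbounded in `α` there are
`D ⊆ C` unbounded in `α` and `k₀ < ω` such that for all `β < η` in `D` and all `k ∈ A`
with `k ≥ k₀` we have `f β k < f η k`. -/
def IsGoodPoint (A : Set ℕ) (f : Ordinal.{u} → ℕ → Ordinal.{u}) (α : Ordinal.{u}) : Prop :=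
  ∀ C : Set Ordinal.{u}, C ⊆ Set.Iio α → (∀ β < α, ∃ γ ∈ C, β ≤ γ) →
    ∃ D ⊆ C, (∀ β < α, ∃ γ ∈ D, β ≤ γ) ∧
      ∃ k₀ : ℕ, ∀ β ∈ D, ∀ η ∈ D, β < η → ∀ k ∈ A, k₀ ≤ k → f β k < f η k

/-! The family consists of the graphs of the `f α`, `α < ℵ_{ω+1}`, coded as subsets of `ℵ_ω`;
the scale property makes distinct `α` give distinct graphs. Suppose some `x` of size `< κ = ℵ_{n+1}`
had `κ` distinct traces. Choose an increasing `κ`-sequence of ordinals with distinct traces on `x`;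
its supremum `α` has cofinality `κ`, so it is good, giving a cofinal `D` in the sequence and a `k₀`
with `f β k < f η k` for `β < η` in `D`, `k ≥ k₀`. Thus the graphs of members of `D` are pairwise
disjoint above level `k₀`, and below it they are finite. So each `β ∈ D` either owns a point of `x`
or has a finite trace, whence `|D| ≤ |x| + ℵ₀ < κ = cf α`, although `D` is cofinal in `α`. -/

open Function Set

theorem Cardinal.mk_finset_le_max (α : Type*) : #(Finset α) ≤ max ℵ₀ #α := by
  cases finite_or_infinite α
  · exact (lt_aleph0_of_finite _).le.trans (le_max_left _ _)
  · rw [mk_finset_of_infinite]; exact le_max_right _ _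

theorem Cardinal.lift_mk_le_max_of_injective_inter {ι : Type v} {L : Type u} {S : ι → Set L}
    {B x : Set L} (hdisj : Pairwise fun i j => Disjoint (S i ∩ B) (S j ∩ B))
    (hfin : ∀ i, (S i \ B).Finite) (hinj : Injective fun i => S i ∩ x) :
    lift.{u} #ι ≤ lift.{v} (max ℵ₀ #x) := by
  classical
  -- `i` either owns a point of `S i ∩ B ∩ x`, shared by no other index, or has a finite trace.
  have hsmall : ∀ i, ¬ (S i ∩ B ∩ x).Nonempty → (Subtype.val ⁻¹' S i : Set x).Finite :=
    fun i h => ((hfin i).preimage Subtype.val_injective.injOn).subset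
      fun y hy => ⟨hy, fun hB => h ⟨y, ⟨hy, hB⟩, y.2⟩⟩
  let g : ι → x ⊕ Finset x := fun i =>
    if h : (S i ∩ B ∩ x).Nonempty then .inl ⟨h.some, h.some_mem.2⟩
    else .inr (hsmall i h).toFinset
  have hg : Injective g := by
    intro i j hij
    simp only [g] at hij
    split_ifs at hij with hi hj hj
    · by_contra hne
      have hy : hi.some = hj.some := congrArg Subtype.val (Sum.inl_injective hij)
      exact (hdisj hne).ne_of_mem hi.some_mem.1 (hy ▸ hj.some_mem.1) rfl
    · exact hinj <| by
        have := congrArg (Subtype.val '' ·) ((Finite.toFinset_inj).1 (Sum.inr_injective hij))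
        simpa [Set.image_preimage_eq_inter_range, Set.inter_comm] using this
  calc lift.{u} #ι ≤ lift.{v} #(x ⊕ Finset x) := lift_mk_le_lift_mk_of_injective hg
    _ ≤ lift.{v} (max ℵ₀ #x) := by
      rw [lift_le, mk_sum, lift_id, lift_id]
      exact add_le_of_le (le_max_left _ _) (le_max_right _ _) (mk_finset_le_max _)

theorem Ordinal.lift_cof_le_mk_of_forall_exists_le {a : Ordinal.{u}} {D : Set Ordinal.{u}}
    (hDa : D ⊆ Iio a) (hD : ∀ β < a, ∃ γ ∈ D, β ≤ γ) : Cardinal.lift.{u + 1} a.cof ≤ #D := by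
  by_contra! h
  have hlt : sSup ((· + 1) '' D) < a :=
    sSup_add_one_lt_of_lt_cof (by rwa [← lift_cof]) hDa
  obtain ⟨γ, hγD, hγ⟩ := hD _ hlt
  have hbdd : BddAbove ((· + 1) '' D) :=
    ⟨a, by rintro _ ⟨δ, hδ, rfl⟩; exact Order.add_one_le_of_lt (hDa hδ)⟩
  exact (hγ.trans_lt (lt_add_one γ)).not_ge (le_csSup hbdd ⟨γ, hγD, rfl⟩)

theorem exists_strictMono_range_subset {β : Type*} [LinearOrder β] [WellFoundedLT β]
    {c : Cardinal.{u}} {g : c.ord.ToType → β} (hg : Injective g) :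
    ∃ φ : c.ord.ToType → β, StrictMono φ ∧ range φ ⊆ range g := by
  let r : c.ord.ToType → c.ord.ToType → Prop := InvImage (· < ·) g
  have : IsWellOrder c.ord.ToType r :=
    (RelEmbedding.mk ⟨g, hg⟩ Iff.rfl : r ↪r ((· < ·) : β → β → Prop)).isWellOrder
  obtain ⟨e⟩ : Nonempty (((· < ·) : c.ord.ToType → c.ord.ToType → Prop) ↪r r) := by
    rw [← Ordinal.type_le_iff', Ordinal.type_toType, Cardinal.ord_le, Ordinal.card_type,
      mk_toType, card_ord]
  exact ⟨g ∘ e, fun a b h => e.map_rel_iff.2 h, range_comp_subset_range _ _⟩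

theorem exists_strictMono_injective_comp {β : Type*} {L : Type u} [LinearOrder β]
    [WellFoundedLT β] {c : Cardinal.{u}} {S : β → L} {s : Set β} (h : c ≤ #(S '' s)) :
    ∃ φ : c.ord.ToType → β, StrictMono φ ∧ (∀ t, φ t ∈ s) ∧ Injective (S ∘ φ) := by
  rw [← mk_toType c.ord |>.trans (card_ord c), Cardinal.le_def] at h
  obtain ⟨ι⟩ := h
  choose g hgs hgS using fun t => (ι t).2
  have hSg : ∀ t, S (g t) = ι t := hgS
  have hg : Injective g := fun a b hab => ι.injective (Subtype.ext <| by rw [← hSg, ← hSg, hab])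
  obtain ⟨φ, hφ, hφg⟩ := exists_strictMono_range_subset hg
  refine ⟨φ, hφ, fun t => ?_, fun a b hab => hφ.injective ?_⟩
  · obtain ⟨t', ht'⟩ := hφg ⟨t, rfl⟩
    exact ht' ▸ hgs t'
  · obtain ⟨a', ha'⟩ := hφg ⟨a, rfl⟩
    obtain ⟨b', hb'⟩ := hφg ⟨b, rfl⟩
    simp only [comp_apply, ← ha', ← hb', hSg] at hab
    rw [← ha', ← hb', ι.injective (Subtype.ext hab)]

theorem Ordinal.exists_injective_nat_prod_Iio {Λ : Ordinal.{u}} (hΛ : ω ≤ Λ) :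
    ∃ code : ℕ × Iio Λ → Λ.ToType, Injective code := by
  have hle : #(ℕ × Λ.ToType) ≤ #Λ.ToType := by
    rw [mk_prod, mk_nat, Cardinal.lift_aleph0, mk_toType, Cardinal.lift_uzero,
      aleph0_mul_eq (aleph0_le_card.2 hΛ)]
  obtain ⟨e⟩ := Cardinal.le_def _ _ |>.1 hle
  exact ⟨fun p => e (p.1, ToType.mk p.2),
    e.injective.comp (injective_id.prodMap (ToType.mk (o := Λ)).injective)⟩

section CodedGraph

variable {L : Type u} {Λ : Ordinal.{u}}

/-- The graph of `g` on `A` as a subset of `L`; coordinates with `g k ≥ Λ` contribute no point. -/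
def codedGraph (code : ℕ × Iio Λ → L) (A : Set ℕ) (g : ℕ → Ordinal.{u}) : Set L :=
  code '' {p | p.1 ∈ A ∧ (p.2 : Ordinal) = g p.1}

theorem codedGraph_ne {code : ℕ × Iio Λ → L} (hcode : Injective code) {A : Set ℕ}
    {g h : ℕ → Ordinal.{u}} {k : ℕ} (hk : k ∈ A) (hgh : g k < h k) (hΛ : h k < Λ) :
    codedGraph code A g ≠ codedGraph code A h := by
  intro hEq
  have hmem : code (k, ⟨h k, hΛ⟩) ∈ codedGraph code A g := hEq ▸ ⟨_, ⟨hk, rfl⟩, rfl⟩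
  obtain ⟨p, ⟨-, hp⟩, hpk⟩ := hmem
  obtain rfl := hcode hpk
  exact hgh.ne hp.symm

theorem finite_codedGraph_diff (code : ℕ × Iio Λ → L) (A : Set ℕ) (g : ℕ → Ordinal.{u})
    (k₀ : ℕ) : (codedGraph code A g \ code '' {p | k₀ ≤ p.1}).Finite := by
  have hsmall : {p : ℕ × Iio Λ | (p.2 : Ordinal) = g p.1 ∧ p.1 < k₀}.Finite := by
    refine Finite.of_finite_image (f := Prod.fst) ((finite_Iio k₀).subset ?_) ?_
    · rintro _ ⟨p, ⟨-, hp⟩, rfl⟩; exact hp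
    · rintro ⟨k, ξ⟩ ⟨hξ, -⟩ ⟨k', ξ'⟩ ⟨hξ', -⟩ (rfl : k = k')
      simp only at hξ hξ'
      rw [Subtype.ext (hξ.trans hξ'.symm)]
  refine (hsmall.image code).subset ?_
  rintro _ ⟨⟨p, ⟨-, hp⟩, rfl⟩, hnot⟩
  exact ⟨p, ⟨hp, not_le.1 fun hk => hnot ⟨p, hk, rfl⟩⟩, rfl⟩

theorem disjoint_codedGraph_inter {code : ℕ × Iio Λ → L} (hcode : Injective code) {A : Set ℕ}
    {g h : ℕ → Ordinal.{u}} {k₀ : ℕ} (hgh : ∀ k ∈ A, k₀ ≤ k → g k < h k) :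
    Disjoint (codedGraph code A g ∩ code '' {p | k₀ ≤ p.1})
      (codedGraph code A h ∩ code '' {p | k₀ ≤ p.1}) := by
  rw [Set.disjoint_left]
  rintro _ ⟨⟨p, ⟨hpA, hp⟩, rfl⟩, ⟨r, hr, hrp⟩⟩ ⟨⟨q, ⟨-, hq⟩, hqp⟩, -⟩
  obtain rfl := hcode hqp
  obtain rfl := hcode hrp
  exact (hgh _ hpA hr).ne (hp.symm.trans hq)

theorem lift_mk_le_max_of_codedGraph_inter_injOn {code : ℕ × Iio Λ → L} (hcode : Injective code)
    {A : Set ℕ} {f : Ordinal.{u} → ℕ → Ordinal.{u}} {D : Set Ordinal.{u}} {k₀ : ℕ}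
    (hD : ∀ β ∈ D, ∀ η ∈ D, β < η → ∀ k ∈ A, k₀ ≤ k → f β k < f η k) {x : Set L}
    (hx : InjOn (fun β => codedGraph code A (f β) ∩ x) D) :
    #D ≤ Cardinal.lift.{u + 1} (max ℵ₀ #x) := by
  have hdisj : Pairwise fun β η : D =>
      Disjoint (codedGraph code A (f β) ∩ code '' {p | k₀ ≤ p.1})
        (codedGraph code A (f η) ∩ code '' {p | k₀ ≤ p.1}) := by
    intro β η hne
    rcases lt_or_gt_of_ne (Subtype.coe_ne_coe.2 hne) with hlt | hlt
    · exact disjoint_codedGraph_inter hcode (hD _ β.2 _ η.2 hlt)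
    · exact (disjoint_codedGraph_inter hcode (hD _ η.2 _ β.2 hlt)).symm
  have := Cardinal.lift_mk_le_max_of_injective_inter hdisj
    (fun β => finite_codedGraph_diff code A (f β) k₀) hx.injective
  rwa [Cardinal.lift_id'.{u, u + 1}] at this

theorem slimFamily_codedGraph {κ : Cardinal.{u}} (hκ : κ.IsRegular) (hκ₀ : ℵ₀ < κ)
    {Ω : Ordinal.{u}} (hκΩ : κ < Ω.cof) {code : ℕ × Iio Λ → L} (hcode : Injective code)
    {A : Set ℕ} {f : Ordinal.{u} → ℕ → Ordinal.{u}}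
    (hgood : ∀ α < Ω, α.cof = κ → IsGoodPoint A f α) :
    SlimFamily κ ((fun α => codedGraph code A (f α)) '' Iio Ω) := by
  intro x hx
  by_contra! hR
  rw [image_image] at hR
  obtain ⟨φ, hφ, hφΩ, hφx⟩ := exists_strictMono_injective_comp hR
  set α := ⨆ t, φ t + 1
  have hαΩ : α < Ω := Ordinal.iSup_add_one_lt_of_lt_cof (by rwa [mk_toType, card_ord]) hφΩ
  have hαcof : α.cof = κ := by rw [Ordinal.cof_iSup_add_one hφ, Ordinal.cof_toType, hκ.cof_ord]
  have hφα : range φ ⊆ Iio α :=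
    range_subset_iff.2 fun t => Ordinal.lt_iSup_add_one_iff.2 ⟨t, le_rfl⟩
  obtain ⟨D, hDφ, hDα, k₀, hk₀⟩ := hgood α hαΩ hαcof (range φ) hφα fun β hβ => by
    obtain ⟨t, ht⟩ := Ordinal.lt_iSup_add_one_iff.1 hβ
    exact ⟨φ t, mem_range_self t, ht⟩
  have hDx : InjOn (fun β => codedGraph code A (f β) ∩ x) D := by
    rintro _ hβ _ hη hβη
    obtain ⟨t, rfl⟩ := hDφ hβ
    obtain ⟨t', rfl⟩ := hDφ hη
    rw [hφx hβη]
  have hκD := Ordinal.lift_cof_le_mk_of_forall_exists_le (hDφ.trans hφα) hDα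
  rw [hαcof] at hκD
  have := hκD.trans (lift_mk_le_max_of_codedGraph_inter_injOn hcode hk₀ hDx)
  exact (Cardinal.lift_le.1 this).not_gt (max_lt hκ₀ hx)

theorem IsScale.injOn_codedGraph {A : Set ℕ} (hA : A.Infinite)
    {f : Ordinal.{u} → ℕ → Ordinal.{u}} (hf : IsScale A f)
    {code : ℕ × Iio (aleph ω).ord → L} (hcode : Injective code) :
    InjOn (fun α => codedGraph code A (f α)) (Iio (aleph (ω + 1)).ord) := by
  have hne : ∀ α β, α < β → β < (aleph (ω + 1)).ord →
      codedGraph code A (f α) ≠ codedGraph code A (f β) := by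
    intro α β hαβ hβ
    obtain ⟨k, hkA, hk⟩ := (hA.sdiff (hf.2.1 α β hαβ hβ)).nonempty
    exact codedGraph_ne hcode hkA (not_not.1 fun h => hk ⟨hkA, h⟩)
      ((hf.1 β hβ k hkA).trans_le (ord_le_ord.2 (aleph_le_aleph.2 (natCast_lt_omega0 k).le)))
  intro α hα β hβ h
  by_contra hαβ
  rcases lt_or_gt_of_ne hαβ with hlt | hlt
  · exact hne α β hlt hβ h
  · exact hne β α hlt hα h.symm

end CodedGraph

/-- If there is a scale on `∏_{k ∈ A} ℵ_k` that is good at every point of cofinality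
`ℵ_{n+1}`, then `KH(ℵ_{n+1}, ℵ_ω)` holds: there is a slim `(ℵ_{n+1}, ℵ_ω)`-family of
cardinality `ℵ_{ω+1}` (subsets of `ℵ_ω` being represented as subsets of the canonical
type `(aleph ω).ord.toType`). -/
theorem stmt9 (n : ℕ) (A : Set ℕ) (hA : A.Infinite)
    (f : Ordinal.{u} → ℕ → Ordinal.{u}) (hf : IsScale A f)
    (hgood : ∀ α < (aleph (omega0 + 1)).ord,
      α.cof = aleph ((n : Ordinal.{u}) + 1) → IsGoodPoint A f α) :
    ∃ F : Set (Set (aleph omega0).ord.ToType),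
      SlimFamily (aleph ((n : Ordinal.{u}) + 1)) F ∧ #F = aleph (omega0 + 1) := by
  obtain ⟨code, hcode⟩ := Ordinal.exists_injective_nat_prod_Iio (Λ := (aleph ω).ord)
    (ord_aleph0.symm.trans_le (ord_le_ord.2 (aleph0_le_aleph ω)))
  have hκ : (aleph ((n : Ordinal.{u}) + 1)).IsRegular := isRegular_aleph_add_one _
  have hκ₀ : ℵ₀ < aleph ((n : Ordinal.{u}) + 1) := aleph0_lt_aleph.2 (by positivity)
  have hκΩ : aleph ((n : Ordinal.{u}) + 1) < (aleph (ω + 1)).ord.cof := by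
    rw [(isRegular_aleph_add_one ω).cof_ord, aleph_lt_aleph]
    exact (by exact_mod_cast natCast_lt_omega0 (n + 1) : (n : Ordinal) + 1 < ω).trans
      (lt_add_one ω)
  refine ⟨_, slimFamily_codedGraph hκ hκ₀ hκΩ hcode hgood, ?_⟩
  rw [← Cardinal.lift_inj.{u, u + 1},
    mk_image_eq_of_injOn_lift _ _ (hf.injOn_codedGraph hA hcode), Cardinal.mk_Iio_ordinal,
    card_ord, Cardinal.lift_id'.{u, u + 1}]
end

section
/- Two conditions (X₁,F₁,g₁) and (X₂,F₂,g₂) of ℚ(κ⁺,λ,μ) are compatible (have a common lower bound) if and only if {s↾(X₁∩X₂) : s ∈ F₁} = {s↾(X₁∩X₂) : s ∈ F₂} and g₁(γ)↾(X₁∩X₂) = g₂(γ)↾(X₁∩X₂) for every γ ∈ dom(g₁) ∩ dom(g₂). -/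
open Cardinal

universe u

/-- Restriction of a two-valued function along an inclusion of subsets. -/
def restr {L : Type u} {X Y : Set L} (h : Y ⊆ X) (s : ↥X → Bool) : ↥Y → Bool :=
  fun a => s ⟨a.1, h a.2⟩

/-- `𝒫'_{κ⁺}(λ)`: the collection of `X ⊆ λ` with `|X| ≤ κ` that are closed under the
(fixed) map `J : 𝒫_{κ⁺}(λ) → λ`, i.e. `J Y ∈ X → Y ⊆ X` whenever `|Y| ≤ κ`. -/
def Pdash (κ : Cardinal.{u}) {L : Type u} (J : Set L → L) : Set (Set L) :=
  {X | #X ≤ κ ∧ ∀ Y : Set L, #Y ≤ κ → J Y ∈ X → Y ⊆ X}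

/-- Raw conditions of the forcing `ℚ(κ⁺,λ,μ)`: triples `(X, F, g)` with `X ⊆ λ`,
`F` a set of functions `X → 2`, and `g` a partial function from `μ` to functions
`X → 2` (represented `Option`-valued). -/
structure QCond (L Mu : Type u) where
  X : Set L
  F : Set (↥X → Bool)
  g : Mu → Option (↥X → Bool)

/-- `(X, F, g)` is a condition of `ℚ(κ⁺,λ,μ)`: (a) `X ∈ 𝒫'_{κ⁺}(λ)`; (b) `|F| ≤ κ`;
(c) `g` is a partial function into `F` with domain of size `≤ κ`; (d) (relevant only when
`κ > ω`) `F` is `κ`-closed: whenever `X` is the union of a strictly increasing sequence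
`(X_i : i < τ)` in `𝒫'_{κ⁺}(λ)` (`τ < κ` regular) with `J (X_i) ∈ X_j` for `i < j < τ`,
and `f : X → 2` satisfies `f ↾ X_i ∈ F ↾ X_i` for all `i < τ`, then `f ∈ F`. -/
def IsQCond (κ : Cardinal.{u}) {L Mu : Type u} (J : Set L → L) (p : QCond L Mu) : Prop :=
  p.X ∈ Pdash κ J ∧
  #p.F ≤ κ ∧
  (∀ γ s, p.g γ = some s → s ∈ p.F) ∧
  #{γ | p.g γ ≠ none} ≤ κ ∧
  (ℵ₀ < κ → ∀ τ : Cardinal.{u}, τ.IsRegular → τ < κ →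
    ∀ Xs : Ordinal.{u} → Set L,
      (∀ i < τ.ord, Xs i ∈ Pdash κ J) →
      (∀ i j : Ordinal.{u}, i < j → j < τ.ord → Xs i ⊆ Xs j ∧ Xs i ≠ Xs j) →
      (∀ i : Ordinal.{u}, i + 1 < τ.ord → J (Xs i) ∈ Xs (i + 1)) →
      (⋃ i ∈ Set.Iio τ.ord, Xs i) = p.X →
      ∀ f : ↥p.X → Bool,
        (∀ i < τ.ord, ∀ h : Xs i ⊆ p.X, restr h f ∈ restr h '' p.F) →
        f ∈ p.F)

/-- The order of `ℚ(κ⁺,λ,μ)`: `p ≤ q` iff (e) `p.X = q.X` or `J q.X ∈ p.X` (whence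
`q.X ⊆ p.X`); (f) `{s ↾ q.X : s ∈ p.F} = q.F`; and (g) `dom g_p ⊇ dom g_q` with
`g_p(γ)` extending `g_q(γ)` as a function for every `γ ∈ dom g_q`. -/
def QLE {L Mu : Type u} (J : Set L → L) (p q : QCond L Mu) : Prop :=
  (p.X = q.X ∨ J q.X ∈ p.X) ∧
  ∃ h : q.X ⊆ p.X,
    restr h '' p.F = q.F ∧
    ∀ γ s, q.g γ = some s → ∃ t, p.g γ = some t ∧ restr h t = s

/-! Necessity: restricting to `X₁ ∩ X₂` through `X₁` or through `X₂` is the same as restricting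
a common extension directly. Sufficiency: close `X₁ ∪ X₂ ∪ {J X₁, J X₂}` under `J⁻¹` to get
`X ∈ 𝒫'_{κ⁺}(λ)`, and take for `F` all `f : X → 2` with `f ↾ X₁ ∈ F₁`, `f ↾ X₂ ∈ F₂` and
`f = 0` off `X₁ ∪ X₂`. Gluing agreeing pairs gives `F ↾ Xᵢ = Fᵢ` and the values of the new `g`.
`F` is `κ`-closed because along any admissible chain with union `X`, `J Xᵢ ∈ X` puts `J Xᵢ` into
one stage, which then contains all of `Xᵢ`; so each defining condition of `F` is checked on a
single stage. -/

open Set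

namespace Cardinal

theorem mk_iUnion_nat_le {L : Type u} {κ : Cardinal.{u}} (hκ : ℵ₀ ≤ κ) (A : ℕ → Set L)
    (hA : ∀ n, #(A n) ≤ κ) : #(⋃ n, A n) ≤ κ := by
  have := mk_iUnion_le_lift A
  simp only [lift_id'.{u, 0}, mk_nat, lift_aleph0] at this
  refine this.trans (mul_le_of_le hκ hκ (ciSup_le' fun n => ?_))
  simpa using hA n

theorem mk_biUnion_le_of_forall_le {L : Type u} {κ : Cardinal.{u}} (hκ : ℵ₀ ≤ κ) (S : Set L)
    (W : L → Set L) (hS : #S ≤ κ) (hW : ∀ x, #(W x) ≤ κ) : #(⋃ x ∈ S, W x) ≤ κ := by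
  have hsup : (⨆ x : S, #(W x.1)) ≤ κ := ciSup_le' fun x => hW x.1
  exact (mk_biUnion_le W S).trans (mul_le_of_le hκ hS hsup)

end Cardinal

theorem exists_closed_superset_mk_le {L : Type u} {κ : Cardinal.{u}} (hκ : ℵ₀ ≤ κ)
    (W : L → Set L) (hW : ∀ x, #(W x) ≤ κ) (A : Set L) (hA : #A ≤ κ) :
    ∃ X, A ⊆ X ∧ #X ≤ κ ∧ ∀ x ∈ X, W x ⊆ X := by
  set step : Set L → Set L := fun S => S ∪ ⋃ x ∈ S, W x
  have hstep : ∀ n, #(step^[n] A) ≤ κ := by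
    intro n
    induction n with
    | zero => exact hA
    | succ n ih =>
      rw [Function.iterate_succ_apply']
      exact (mk_union_le _ _).trans
        (add_le_of_le hκ ih (mk_biUnion_le_of_forall_le hκ _ W ih hW))
  refine ⟨⋃ n, step^[n] A, subset_iUnion_of_subset 0 subset_rfl, mk_iUnion_nat_le hκ _ hstep, ?_⟩
  intro x hx
  obtain ⟨n, hn⟩ := mem_iUnion.1 hx
  refine subset_iUnion_of_subset (n + 1) ?_
  rw [Function.iterate_succ_apply']
  exact subset_union_right.trans' (subset_biUnion_of_mem hn)

theorem exists_mem_Pdash_superset {L : Type u} {κ : Cardinal.{u}} (hκ : ℵ₀ ≤ κ)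
    {J : Set L → L} (hJinj : InjOn J {Y | #Y ≤ κ}) (hJsurj : SurjOn J {Y | #Y ≤ κ} univ)
    (A : Set L) (hA : #A ≤ κ) : ∃ X ∈ Pdash κ J, A ⊆ X := by
  choose W hW hJW using fun x => hJsurj (mem_univ x)
  obtain ⟨X, hAX, hX, hWX⟩ := exists_closed_superset_mk_le hκ W hW A hA
  refine ⟨X, ⟨hX, fun Y hY hJY => ?_⟩, hAX⟩
  rw [← hJinj (hW (J Y)) hY (hJW (J Y))]
  exact hWX _ hJY

section Glue

variable {L : Type u} {P Q X : Set L}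

def Agree (s : P → Bool) (t : Q → Bool) : Prop :=
  restr (Y := P ∩ Q) inter_subset_left s = restr (Y := P ∩ Q) inter_subset_right t

def SameTrace (F : Set (P → Bool)) (G : Set (Q → Bool)) : Prop :=
  restr (Y := P ∩ Q) inter_subset_left '' F = restr (Y := P ∩ Q) inter_subset_right '' G

theorem restr_eq_restr_of_subset {Y Z : Set L} {f f' : X → Bool} (hY : Y ⊆ X) (hZY : Z ⊆ Y)
    (h : restr hY f = restr hY f') : restr (hZY.trans hY) f = restr (hZY.trans hY) f' :=
  funext fun x => congrFun h ⟨x, hZY x.2⟩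

theorem SameTrace.exists_agree_right {F : Set (P → Bool)} {G : Set (Q → Bool)}
    (hFG : SameTrace F G) {s : P → Bool} (hs : s ∈ F) : ∃ t ∈ G, Agree s t := by
  obtain ⟨t, ht, h⟩ := hFG ▸ mem_image_of_mem _ hs
  exact ⟨t, ht, h.symm⟩

theorem SameTrace.exists_agree_left {F : Set (P → Bool)} {G : Set (Q → Bool)}
    (hFG : SameTrace F G) {t : Q → Bool} (ht : t ∈ G) : ∃ s ∈ F, Agree s t :=
  (hFG ▸ mem_image_of_mem _ ht :)

open Classical in
noncomputable def glue (X : Set L) (s : P → Bool) (t : Q → Bool) : X → Bool :=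
  fun x => if h : x.1 ∈ P then s ⟨x, h⟩ else if h' : x.1 ∈ Q then t ⟨x, h'⟩ else false

theorem restr_glue_left (hP : P ⊆ X) (s : P → Bool) (t : Q → Bool) :
    restr hP (glue X s t) = s := by
  funext x
  simp [restr, glue, x.2]

theorem restr_glue_right (hQ : Q ⊆ X) {s : P → Bool} {t : Q → Bool} (h : Agree s t) :
    restr hQ (glue X s t) = t := by
  funext x
  by_cases hx : x.1 ∈ P
  · simpa [restr, glue, hx] using congrFun h ⟨x, hx, x.2⟩
  · simp [restr, glue, hx, x.2]

theorem glue_apply_of_notMem {s : P → Bool} {t : Q → Bool} {x : X} (hP : x.1 ∉ P)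
    (hQ : x.1 ∉ Q) : glue X s t x = false := by
  simp [glue, hP, hQ]

def TraceCompatible {Mu : Type u} (p q : QCond L Mu) : Prop :=
  SameTrace p.F q.F ∧ ∀ γ s t, p.g γ = some s → q.g γ = some t → Agree s t

end Glue

section Amalgamation

variable {L Mu : Type u} {p q : QCond L Mu} {X : Set L} (hpX : p.X ⊆ X) (hqX : q.X ⊆ X)

def amalgF : Set (X → Bool) :=
  {f | restr hpX f ∈ p.F ∧ restr hqX f ∈ q.F ∧ ∀ x : X, x.1 ∉ p.X → x.1 ∉ q.X → f x = false}

theorem glue_mem_amalgF {s : p.X → Bool} {t : q.X → Bool} (hs : s ∈ p.F) (ht : t ∈ q.F)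
    (h : Agree s t) : glue X s t ∈ amalgF hpX hqX :=
  ⟨by rwa [restr_glue_left], by rwa [restr_glue_right hqX h], fun _ => glue_apply_of_notMem⟩

theorem restr_image_amalgF_left (hF : SameTrace p.F q.F) :
    restr hpX '' amalgF hpX hqX = p.F := by
  refine subset_antisymm (image_subset_iff.2 fun f hf => hf.1) fun s hs => ?_
  obtain ⟨t, ht, h⟩ := hF.exists_agree_right hs
  exact ⟨glue X s t, glue_mem_amalgF hpX hqX hs ht h, restr_glue_left hpX s t⟩

theorem restr_image_amalgF_right (hF : SameTrace p.F q.F) :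
    restr hqX '' amalgF hpX hqX = q.F := by
  refine subset_antisymm (image_subset_iff.2 fun f hf => hf.2.1) fun t ht => ?_
  obtain ⟨s, hs, h⟩ := hF.exists_agree_left ht
  exact ⟨glue X s t, glue_mem_amalgF hpX hqX hs ht h, restr_glue_right hqX h⟩

theorem mk_amalgF_le {κ : Cardinal.{u}} (hκ : ℵ₀ ≤ κ) (hp : #p.F ≤ κ) (hq : #q.F ≤ κ) :
    #(amalgF hpX hqX) ≤ κ := by
  let π : amalgF hpX hqX → p.F × q.F := fun f => (⟨_, f.2.1⟩, ⟨_, f.2.2.1⟩)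
  have hπ : Function.Injective π := by
    intro f f' h
    simp only [π, Prod.mk.injEq, Subtype.mk.injEq] at h
    ext x
    by_cases hxp : x.1 ∈ p.X
    · exact congrFun h.1 ⟨x, hxp⟩
    by_cases hxq : x.1 ∈ q.X
    · exact congrFun h.2 ⟨x, hxq⟩
    rw [f.2.2.2 x hxp hxq, f'.2.2.2 x hxp hxq]
  refine (mk_le_of_injective hπ).trans ?_
  rw [mk_prod, lift_id, lift_id]
  exact mul_le_of_le hκ hp hq

theorem mem_amalgF_of_forall_restr_mem {ι : Type*} {I : Set ι} {Ys : ι → Set L}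
    (hYs : ⋃ i ∈ I, Ys i = X) {f : X → Bool}
    (hf : ∀ i ∈ I, ∀ h : Ys i ⊆ X, restr h f ∈ restr h '' amalgF hpX hqX)
    (hp : ∃ i ∈ I, p.X ⊆ Ys i) (hq : ∃ i ∈ I, q.X ⊆ Ys i) : f ∈ amalgF hpX hqX := by
  have hYX : ∀ i ∈ I, Ys i ⊆ X := fun i hi => hYs ▸ subset_biUnion_of_mem hi
  obtain ⟨i, hi, hpY⟩ := hp
  obtain ⟨g, hg, hgf⟩ := hf i hi (hYX i hi)
  obtain ⟨j, hj, hqY⟩ := hq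
  obtain ⟨g', hg', hg'f⟩ := hf j hj (hYX j hj)
  refine ⟨?_, ?_, fun x hxp hxq => ?_⟩
  · exact restr_eq_restr_of_subset (hYX i hi) hpY hgf ▸ hg.1
  · exact restr_eq_restr_of_subset (hYX j hj) hqY hg'f ▸ hg'.2.1
  · obtain ⟨k, hk, hxk⟩ := mem_iUnion₂.1 (hYs.symm ▸ x.2 : x.1 ∈ ⋃ i ∈ I, Ys i)
    obtain ⟨g, hg, hgf⟩ := hf k hk (hYX k hk)
    exact (congrFun hgf ⟨x, hxk⟩).symm.trans (hg.2.2 x hxp hxq)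

def Amalgamates (γ : Mu) (f : X → Bool) : Prop :=
  f ∈ amalgF hpX hqX ∧ (∀ s ∈ p.g γ, restr hpX f = s) ∧ ∀ t ∈ q.g γ, restr hqX f = t

open Classical in
noncomputable def amalgG (γ : Mu) : Option (X → Bool) :=
  if p.g γ = none ∧ q.g γ = none then none
  else some (Classical.epsilon (Amalgamates hpX hqX γ))

theorem amalgG_eq_none_iff {γ : Mu} :
    amalgG hpX hqX γ = none ↔ p.g γ = none ∧ q.g γ = none := by
  unfold amalgG
  split_ifs with h <;> simp [h]

noncomputable def amalg : QCond L Mu := ⟨X, amalgF hpX hqX, amalgG hpX hqX⟩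

theorem exists_amalgamates (hpF : ∀ γ s, p.g γ = some s → s ∈ p.F)
    (hqF : ∀ γ t, q.g γ = some t → t ∈ q.F) (hpq : TraceCompatible p q) {γ : Mu}
    (hγ : ¬(p.g γ = none ∧ q.g γ = none)) : ∃ f, Amalgamates hpX hqX γ f := by
  suffices ∃ s ∈ p.F, ∃ t ∈ q.F, Agree s t ∧ (∀ s' ∈ p.g γ, s = s') ∧ ∀ t' ∈ q.g γ, t = t' by
    obtain ⟨s, hs, t, ht, h, hps, hqt⟩ := this
    refine ⟨glue X s t, glue_mem_amalgF hpX hqX hs ht h, fun s' hs' => ?_, fun t' ht' => ?_⟩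
    · rw [restr_glue_left, hps s' hs']
    · rw [restr_glue_right hqX h, hqt t' ht']
  rcases hs : p.g γ with _ | s <;> rcases ht : q.g γ with _ | t
  · exact absurd ⟨hs, ht⟩ hγ
  · obtain ⟨s, hs', h⟩ := hpq.1.exists_agree_left (hqF γ t ht)
    exact ⟨s, hs', t, hqF γ t ht, h, by simp, by simp⟩
  · obtain ⟨t, ht', h⟩ := hpq.1.exists_agree_right (hpF γ s hs)
    exact ⟨s, hpF γ s hs, t, ht', h, by simp, by simp⟩
  · exact ⟨s, hpF γ s hs, t, hqF γ t ht, hpq.2 γ s t hs ht, by simp, by simp⟩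

theorem amalgamates_of_amalgG_eq_some (hpF : ∀ γ s, p.g γ = some s → s ∈ p.F)
    (hqF : ∀ γ t, q.g γ = some t → t ∈ q.F) (hpq : TraceCompatible p q) {γ : Mu} {f : X → Bool}
    (hf : amalgG hpX hqX γ = some f) : Amalgamates hpX hqX γ f := by
  unfold amalgG at hf
  split_ifs at hf with hγ
  cases hf
  exact Classical.epsilon_spec (exists_amalgamates hpX hqX hpF hqF hpq hγ)

theorem isQCond_amalg {κ : Cardinal.{u}} (hκ : ℵ₀ ≤ κ) {J : Set L → L} (hX : X ∈ Pdash κ J)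
    (hJp : J p.X ∈ X) (hJq : J q.X ∈ X) (hp : IsQCond κ J p) (hq : IsQCond κ J q)
    (hpq : TraceCompatible p q) :
    IsQCond κ J (amalg hpX hqX) := by
  refine ⟨hX, mk_amalgF_le hpX hqX hκ hp.2.1 hq.2.1,
    fun γ f hf => (amalgamates_of_amalgG_eq_some hpX hqX hp.2.2.1 hq.2.2.1 hpq hf).1, ?_, ?_⟩
  · have hdom : {γ | amalgG hpX hqX γ ≠ none} ⊆ {γ | p.g γ ≠ none} ∪ {γ | q.g γ ≠ none} :=
      fun γ hγ => by simpa [amalgG_eq_none_iff, or_iff_not_and_not] using hγ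
    exact (mk_le_mk_of_subset hdom).trans
      ((mk_union_le _ _).trans (add_le_of_le hκ hp.2.2.2.1 hq.2.2.2.1))
  · intro _ τ _ _ Xs hXs _ _ hXsX f hf
    -- `J Z ∈ X` puts `J Z` in some `Xs i`, whose closure under `J` then swallows `Z`.
    have hcover : ∀ Z ∈ Pdash κ J, J Z ∈ X → ∃ i ∈ Iio τ.ord, Z ⊆ Xs i := by
      intro Z hZ hJZ
      obtain ⟨i, hi, hJi⟩ := mem_iUnion₂.1 (hXsX.symm ▸ hJZ : J Z ∈ ⋃ i ∈ Iio τ.ord, Xs i)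
      exact ⟨i, hi, (hXs i hi).2 Z hZ.1 hJi⟩
    exact mem_amalgF_of_forall_restr_mem hpX hqX hXsX hf (hcover _ hp.1 hJp) (hcover _ hq.1 hJq)

theorem qle_amalg_left {J : Set L → L} (hJp : J p.X ∈ X) (hpF : ∀ γ s, p.g γ = some s → s ∈ p.F)
    (hqF : ∀ γ t, q.g γ = some t → t ∈ q.F) (hpq : TraceCompatible p q) :
    QLE J (amalg hpX hqX) p := by
  refine ⟨Or.inr hJp, hpX, restr_image_amalgF_left hpX hqX hpq.1, fun γ s hs => ?_⟩
  obtain ⟨f, hf⟩ := Option.ne_none_iff_exists'.1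
    (mt (amalgG_eq_none_iff hpX hqX (γ := γ)).1 (by simp [hs]))
  exact ⟨f, hf, (amalgamates_of_amalgG_eq_some hpX hqX hpF hqF hpq hf).2.1 s hs⟩

theorem qle_amalg_right {J : Set L → L} (hJq : J q.X ∈ X) (hpF : ∀ γ s, p.g γ = some s → s ∈ p.F)
    (hqF : ∀ γ t, q.g γ = some t → t ∈ q.F) (hpq : TraceCompatible p q) :
    QLE J (amalg hpX hqX) q := by
  refine ⟨Or.inr hJq, hqX, restr_image_amalgF_right hpX hqX hpq.1, fun γ t ht => ?_⟩
  obtain ⟨f, hf⟩ := Option.ne_none_iff_exists'.1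
    (mt (amalgG_eq_none_iff hpX hqX (γ := γ)).1 (by simp [ht]))
  exact ⟨f, hf, (amalgamates_of_amalgG_eq_some hpX hqX hpF hqF hpq hf).2.2 t ht⟩

end Amalgamation

theorem traceCompatible_of_qle {L Mu : Type u} {J : Set L → L} {r p q : QCond L Mu}
    (hp : QLE J r p) (hq : QLE J r q) : TraceCompatible p q := by
  obtain ⟨-, _, hFp, hgp⟩ := hp
  obtain ⟨-, _, hFq, hgq⟩ := hq
  refine ⟨?_, fun γ s t hs ht => ?_⟩
  · rw [SameTrace, ← hFp, ← hFq, ← image_comp, ← image_comp]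
    rfl
  · obtain ⟨f, hf, rfl⟩ := hgp γ s hs
    obtain ⟨f', hf', rfl⟩ := hgq γ t ht
    cases hf.symm.trans hf'
    rfl

theorem exists_common_lower_bound {L Mu : Type u} {κ : Cardinal.{u}} (hκ : ℵ₀ ≤ κ)
    {J : Set L → L} (hJinj : InjOn J {Y | #Y ≤ κ}) (hJsurj : SurjOn J {Y | #Y ≤ κ} univ)
    {p q : QCond L Mu} (hp : IsQCond κ J p) (hq : IsQCond κ J q) (hpq : TraceCompatible p q) :
    ∃ r, IsQCond κ J r ∧ QLE J r p ∧ QLE J r q := by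
  set A := insert (J p.X) (insert (J q.X) (p.X ∪ q.X))
  have h1 : (1 : Cardinal) ≤ κ := one_le_aleph0.trans hκ
  have hA : #A ≤ κ := mk_insert_le.trans <| add_le_of_le hκ (mk_insert_le.trans <|
    add_le_of_le hκ ((mk_union_le _ _).trans (add_le_of_le hκ hp.1.1 hq.1.1)) h1) h1
  obtain ⟨X, hX, hAX⟩ := exists_mem_Pdash_superset hκ hJinj hJsurj A hA
  have hpX : p.X ⊆ X := fun x hx => hAX (.inr (.inr (.inl hx)))
  have hqX : q.X ⊆ X := fun x hx => hAX (.inr (.inr (.inr hx)))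
  have hJp : J p.X ∈ X := hAX (.inl rfl)
  have hJq : J q.X ∈ X := hAX (.inr (.inl rfl))
  exact ⟨amalg hpX hqX, isQCond_amalg hpX hqX hκ hX hJp hJq hp hq hpq,
    qle_amalg_left hpX hqX hJp hp.2.2.1 hq.2.2.1 hpq,
    qle_amalg_right hpX hqX hJq hp.2.2.1 hq.2.2.1 hpq⟩

theorem stmt15_general (κ lam μ : Cardinal.{u}) (hκ : κ.IsRegular)
    (J : Set lam.ord.ToType → lam.ord.ToType)
    (hJ : Set.BijOn J {X : Set lam.ord.ToType | #X ≤ κ} Set.univ)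
    (p q : QCond lam.ord.ToType μ.ord.ToType)
    (hp : IsQCond κ J p) (hq : IsQCond κ J q) :
    (∃ r : QCond lam.ord.ToType μ.ord.ToType, IsQCond κ J r ∧ QLE J r p ∧ QLE J r q) ↔
    (restr (X := p.X) (Y := p.X ∩ q.X) Set.inter_subset_left '' p.F =
        restr (X := q.X) (Y := p.X ∩ q.X) Set.inter_subset_right '' q.F ∧
      ∀ γ s t, p.g γ = some s → q.g γ = some t →
        restr (X := p.X) (Y := p.X ∩ q.X) Set.inter_subset_left s =
          restr (X := q.X) (Y := p.X ∩ q.X) Set.inter_subset_right t) :=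
  ⟨fun ⟨_, _, hrp, hrq⟩ => traceCompatible_of_qle hrp hrq,
    exists_common_lower_bound hκ.aleph0_le hJ.injOn hJ.surjOn hp hq⟩

/-- Compatibility criterion in `ℚ(κ⁺,λ,μ)`: two conditions `p, q` are compatible iff
`{s ↾ (X₁ ∩ X₂) : s ∈ F₁} = {s ↾ (X₁ ∩ X₂) : s ∈ F₂}` and
`g₁(γ) ↾ (X₁ ∩ X₂) = g₂(γ) ↾ (X₁ ∩ X₂)` for every `γ ∈ dom g₁ ∩ dom g₂`. Here `λ` and
`μ` are represented by the canonical types `lam.ord.ToType` and `μ.ord.ToType`, and `J`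
is a bijection from `𝒫_{κ⁺}(λ)` onto `λ`. -/
theorem stmt15 (κ lam μ : Cardinal.{u}) (hκ : κ.IsRegular) (hlam : lam.IsRegular)
    (hkl : κ < lam) (hpow : κ ^< κ = κ) (h2κ : (2 : Cardinal.{u}) ^ κ = Order.succ κ)
    (hlκ : lam ^ κ = lam)
    (J : Set lam.ord.ToType → lam.ord.ToType)
    (hJ : Set.BijOn J {X : Set lam.ord.ToType | #X ≤ κ} Set.univ)
    (p q : QCond lam.ord.ToType μ.ord.ToType)
    (hp : IsQCond κ J p) (hq : IsQCond κ J q) :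
    (∃ r : QCond lam.ord.ToType μ.ord.ToType, IsQCond κ J r ∧ QLE J r p ∧ QLE J r q) ↔
    (restr (X := p.X) (Y := p.X ∩ q.X) Set.inter_subset_left '' p.F =
        restr (X := q.X) (Y := p.X ∩ q.X) Set.inter_subset_right '' q.F ∧
      ∀ γ s t, p.g γ = some s → q.g γ = some t →
        restr (X := p.X) (Y := p.X ∩ q.X) Set.inter_subset_left s =
          restr (X := q.X) (Y := p.X ∩ q.X) Set.inter_subset_right t) :=
  stmt15_general κ lam μ hκ J hJ p q hp hq
end

section
/- Let η < μ and let ℚ(κ⁺,λ,η) be defined using the same bijection J as ℚ(κ⁺,λ,μ). The map π : ℚ(κ⁺,λ,μ) → ℚ(κ⁺,λ,η) given by π(X,F,g) = (X,F,g↾η) is a projection: it is order-preserving, and for every condition q = (X₁,F₁,g₁) ∈ ℚ(κ⁺,λ,μ) and every condition p = (X₂,F₂,g₂) ∈ ℚ(κ⁺,λ,η) with p ≤ π(q), there exists q' ∈ ℚ(κ⁺,λ,μ) with q' ≤ q and π(q') = p. -/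
open Cardinal

universe u

/-- Raw conditions of the forcings `ℚ(κ⁺,λ,ν)`: triples `(X, F, g)` with `X ⊆ λ`, `F` a
set of functions `X → 2`, and `g` a partial (`Option`-valued) function on ordinals with
values among functions `X → 2`; the third coordinate of `ℚ(κ⁺,λ,ν)` is a partial
function defined on ordinals `< ν`. -/
structure QCondO (L : Type u) where
  X : Set L
  F : Set (↥X → Bool)
  g : Ordinal.{u} → Option (↥X → Bool)

/-- `(X, F, g)` is a condition of `ℚ(κ⁺,λ,ν)`: (a) `X ∈ 𝒫'_{κ⁺}(λ)`; (b) `|F| ≤ κ`;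
(c) `g` is a partial function from `ν` into `F` with domain of size `≤ κ`; (d) (relevant
only when `κ > ω`) `F` is `κ`-closed: whenever `X` is the union of a strictly increasing
sequence `(X_i : i < τ)` in `𝒫'_{κ⁺}(λ)` (`τ < κ` regular) with `J (X_i) ∈ X_j` for
`i < j < τ`, and `f : X → 2` satisfies `f ↾ X_i ∈ F ↾ X_i` for all `i < τ`, then
`f ∈ F`. -/
def IsQCondO (κ ν : Cardinal.{u}) {L : Type u} (J : Set L → L) (p : QCondO L) : Prop :=
  p.X ∈ Pdash κ J ∧
  #p.F ≤ κ ∧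
  (∀ γ s, p.g γ = some s → γ < ν.ord ∧ s ∈ p.F) ∧
  #{γ | p.g γ ≠ none} ≤ Cardinal.lift.{u + 1} κ ∧
  (ℵ₀ < κ → ∀ τ : Cardinal.{u}, τ.IsRegular → τ < κ →
    ∀ Xs : Ordinal.{u} → Set L,
      (∀ i < τ.ord, Xs i ∈ Pdash κ J) →
      (∀ i j : Ordinal.{u}, i < j → j < τ.ord → Xs i ⊆ Xs j ∧ Xs i ≠ Xs j) →
      (∀ i : Ordinal.{u}, i + 1 < τ.ord → J (Xs i) ∈ Xs (i + 1)) →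
      (⋃ i ∈ Set.Iio τ.ord, Xs i) = p.X →
      ∀ f : ↥p.X → Bool,
        (∀ i < τ.ord, ∀ h : Xs i ⊆ p.X, restr h f ∈ restr h '' p.F) →
        f ∈ p.F)

/-- The common order of the forcings `ℚ(κ⁺,λ,ν)`: `p ≤ q` iff (e) `p.X = q.X` or
`J q.X ∈ p.X` (whence `q.X ⊆ p.X`); (f) `{s ↾ q.X : s ∈ p.F} = q.F`; and (g)
`dom g_p ⊇ dom g_q` with `g_p(γ)` extending `g_q(γ)` for every `γ ∈ dom g_q`. -/
def QLEO {L : Type u} (J : Set L → L) (p q : QCondO L) : Prop :=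
  (p.X = q.X ∨ J q.X ∈ p.X) ∧
  ∃ h : q.X ⊆ p.X,
    restr h '' p.F = q.F ∧
    ∀ γ s, q.g γ = some s → ∃ t, p.g γ = some t ∧ restr h t = s

/-- The projection `π : ℚ(κ⁺,λ,μ) → ℚ(κ⁺,λ,η)`, `(X, F, g) ↦ (X, F, g ↾ η)`. -/
noncomputable def projQ (η : Cardinal.{u}) {L : Type u} (p : QCondO L) : QCondO L :=
  ⟨p.X, p.F, fun γ => if γ < η.ord then p.g γ else none⟩

/-!
The projection `π(X, F, g) = (X, F, g ↾ η)` only shortens the third coordinate, so it maps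
conditions to conditions and preserves the order. Given `p ≤ π(q)`, the condition `q'` keeps
`X` and `F` of `p`, agrees with `p` below `η`, and at `γ ≥ η` takes an extension in `p.F` of
`q.g γ ∈ q.F`; such an extension exists because `q.F` is exactly the set of restrictions of
members of `p.F`. Its domain is covered by the domains of `p.g` and `q.g`, hence still has
size at most `κ + κ = κ`.
-/

section

variable {L : Type u} {J : Set L → L} {κ μ η : Cardinal.{u}}

theorem projQ_g_eq_some {p : QCondO L} {γ : Ordinal.{u}} {s : ↥p.X → Bool} :
    (projQ η p).g γ = some s ↔ γ < η.ord ∧ p.g γ = some s := by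
  simp only [projQ]
  split_ifs with hγ <;> simp [hγ]

theorem isQCondO_projQ {p : QCondO L} (hp : IsQCondO κ μ J p) :
    IsQCondO κ η J (projQ η p) := by
  obtain ⟨hX, hF, hg, hdom, hclosed⟩ := hp
  refine ⟨hX, hF, fun γ s hs => ?_, (mk_le_mk_of_subset fun γ hγ => ?_).trans hdom, hclosed⟩
  · obtain ⟨hγ, hs⟩ := projQ_g_eq_some.mp hs
    exact ⟨hγ, (hg γ s hs).2⟩
  · change (if γ < η.ord then p.g γ else none) ≠ none at hγ
    exact fun hpγ => hγ (by rw [hpγ, ite_self])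

theorem qleo_projQ {p q : QCondO L} (hpq : QLEO J p q) : QLEO J (projQ η p) (projQ η q) := by
  obtain ⟨hX, h, hF, hg⟩ := hpq
  refine ⟨hX, h, hF, fun γ s hs => ?_⟩
  obtain ⟨hγ, hs⟩ := projQ_g_eq_some.mp hs
  obtain ⟨t, ht, hts⟩ := hg γ s hs
  exact ⟨t, projQ_g_eq_some.mpr ⟨hγ, ht⟩, hts⟩

noncomputable def amalgQ (η : Cardinal.{u}) (p q : QCondO L) (h : q.X ⊆ p.X) : QCondO L :=
  ⟨p.X, p.F, fun γ =>
    if γ < η.ord then p.g γ else (q.g γ).map (Function.invFunOn (restr h) p.F)⟩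

theorem mk_dom_amalgQ_le (hκ : ℵ₀ ≤ κ) {p q : QCondO L} (h : q.X ⊆ p.X)
    (hp : IsQCondO κ η J p) (hq : IsQCondO κ μ J q) :
    #{γ | (amalgQ η p q h).g γ ≠ none} ≤ lift.{u + 1} κ := by
  have hdom : {γ | (amalgQ η p q h).g γ ≠ none} ⊆
      {γ | p.g γ ≠ none} ∪ {γ | q.g γ ≠ none} := by
    intro γ (hγ : (if γ < η.ord then p.g γ else _) ≠ none)
    split_ifs at hγ
    · exact Or.inl hγ
    · exact Or.inr (by simpa using hγ)
  calc #{γ | (amalgQ η p q h).g γ ≠ none}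
      ≤ #{γ | p.g γ ≠ none} + #{γ | q.g γ ≠ none} :=
        (mk_le_mk_of_subset hdom).trans (mk_union_le _ _)
    _ ≤ lift.{u + 1} κ + lift.{u + 1} κ := add_le_add hp.2.2.2.1 hq.2.2.2.1
    _ = lift.{u + 1} κ := add_eq_self (aleph0_le_lift.mpr hκ)

theorem isQCondO_amalgQ (hκ : ℵ₀ ≤ κ) (hημ : η ≤ μ) {p q : QCondO L} (h : q.X ⊆ p.X)
    (hF : restr h '' p.F = q.F) (hp : IsQCondO κ η J p) (hq : IsQCondO κ μ J q) :
    IsQCondO κ μ J (amalgQ η p q h) := by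
  refine ⟨hp.1, hp.2.1, fun γ s hs => ?_, mk_dom_amalgQ_le hκ h hp hq, hp.2.2.2.2⟩
  change (if γ < η.ord then p.g γ else _) = some s at hs
  split_ifs at hs with hγ
  · obtain ⟨hγη, hsF⟩ := hp.2.2.1 γ s hs
    exact ⟨hγη.trans_le (ord_le_ord.mpr hημ), hsF⟩
  · obtain ⟨s₀, hs₀, rfl⟩ := Option.map_eq_some_iff.mp hs
    obtain ⟨hγμ, hs₀F⟩ := hq.2.2.1 γ s₀ hs₀
    exact ⟨hγμ, Function.invFunOn_mem (show s₀ ∈ restr h '' p.F from hF ▸ hs₀F)⟩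

theorem amalgQ_le {p q : QCondO L} (h : q.X ⊆ p.X) (hq : IsQCondO κ μ J q)
    (hpq : QLEO J p (projQ η q)) : QLEO J (amalgQ η p q h) q := by
  obtain ⟨hX, _, hF, hg⟩ := hpq
  refine ⟨hX, h, hF, fun γ s hs => ?_⟩
  by_cases hγ : γ < η.ord
  · obtain ⟨t, ht, hts⟩ := hg γ s (projQ_g_eq_some.mpr ⟨hγ, hs⟩)
    exact ⟨t, by simp [amalgQ, hγ, ht], hts⟩
  · have hsF : s ∈ restr h '' p.F := hF ▸ (hq.2.2.1 γ s hs).2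
    exact ⟨_, by simp [amalgQ, hγ, hs], Function.invFunOn_eq hsF⟩

theorem projQ_amalgQ {p q : QCondO L} (h : q.X ⊆ p.X) (hp : IsQCondO κ η J p) :
    projQ η (amalgQ η p q h) = p := by
  have hg : (fun γ => if γ < η.ord then (amalgQ η p q h).g γ else none) = p.g := by
    funext γ
    by_cases hγ : γ < η.ord
    · simp [amalgQ, hγ]
    · rw [if_neg hγ]
      cases hpγ : p.g γ with
      | none => rfl
      | some s => exact absurd (hp.2.2.1 γ s hpγ).1 hγ
  simp only [projQ]
  exact congrArg _ hg

end

theorem stmt16_general (κ lam μ η : Cardinal.{u}) (hκ : κ.IsRegular) (hη : η < μ)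
    (J : Set lam.ord.ToType → lam.ord.ToType) :
    (∀ p : QCondO lam.ord.ToType, IsQCondO κ μ J p → IsQCondO κ η J (projQ η p)) ∧
    (∀ p q : QCondO lam.ord.ToType, IsQCondO κ μ J p → IsQCondO κ μ J q →
      QLEO J p q → QLEO J (projQ η p) (projQ η q)) ∧
    (∀ q : QCondO lam.ord.ToType, IsQCondO κ μ J q →
      ∀ p : QCondO lam.ord.ToType, IsQCondO κ η J p → QLEO J p (projQ η q) →
        ∃ q' : QCondO lam.ord.ToType,
          IsQCondO κ μ J q' ∧ QLEO J q' q ∧ projQ η q' = p) := by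
  refine ⟨fun p => isQCondO_projQ, fun p q _ _ => qleo_projQ, fun q hq p hp hpq => ?_⟩
  have h : q.X ⊆ p.X := hpq.2.1
  have hF : restr h '' p.F = q.F := hpq.2.2.1
  exact ⟨amalgQ η p q h, isQCondO_amalgQ hκ.aleph0_le hη.le h hF hp hq, amalgQ_le h hq hpq,
    projQ_amalgQ h hp⟩

/-- For `η < μ`, the map `π(X,F,g) = (X,F,g↾η)` is a projection from `ℚ(κ⁺,λ,μ)` onto
`ℚ(κ⁺,λ,η)` (both defined using the same bijection `J`): it maps conditions to
conditions, preserves the order, and whenever `p ∈ ℚ(κ⁺,λ,η)` satisfies `p ≤ π(q)`,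
there is `q' ∈ ℚ(κ⁺,λ,μ)` with `q' ≤ q` and `π(q') = p`. Here `λ` is represented by the
canonical type `lam.ord.ToType` and `J` is a bijection from `𝒫_{κ⁺}(λ)` onto `λ`. -/
theorem stmt16 (κ lam μ η : Cardinal.{u}) (hκ : κ.IsRegular) (hlam : lam.IsRegular)
    (hkl : κ < lam) (hpow : κ ^< κ = κ) (h2κ : (2 : Cardinal.{u}) ^ κ = Order.succ κ)
    (hlκ : lam ^ κ = lam) (hη : η < μ)
    (J : Set lam.ord.ToType → lam.ord.ToType)
    (hJ : Set.BijOn J {X : Set lam.ord.ToType | #X ≤ κ} Set.univ) :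
    (∀ p : QCondO lam.ord.ToType, IsQCondO κ μ J p → IsQCondO κ η J (projQ η p)) ∧
    (∀ p q : QCondO lam.ord.ToType, IsQCondO κ μ J p → IsQCondO κ μ J q →
      QLEO J p q → QLEO J (projQ η p) (projQ η q)) ∧
    (∀ q : QCondO lam.ord.ToType, IsQCondO κ μ J q →
      ∀ p : QCondO lam.ord.ToType, IsQCondO κ η J p → QLEO J p (projQ η q) →
        ∃ q' : QCondO lam.ord.ToType,
          IsQCondO κ μ J q' ∧ QLEO J q' q ∧ projQ η q' = p) :=
  stmt16_general κ lam μ η hκ hη J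
end

section
/- Suppose τ and τ' are infinite regular cardinals, (X_i : i < τ) and (Y_j : j < τ') are strictly increasing sequences in 𝒫'_{κ⁺}(λ) with J(X_i) ∈ X_{i+1} for all i < τ and J(Y_j) ∈ Y_{j+1} for all j < τ', and ∪_{i<τ} X_i = ∪_{j<τ'} Y_j. Then the sequences are interleaved — every X_i is contained in some Y_j and every Y_j is contained in some X_i — and τ = τ'. -/
/-!
Since `Y_j` is `J`-closed and `|X_i| ≤ κ`, the point `J(X_i) ∈ X_{i+1}` lands in some `Y_j` and
drags all of `X_i` into `Y_j`; symmetrically every `Y_j` lies in some `X_i`. If `τ' < τ = cf τ`,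
the `τ'` indices `i` chosen for the `Y_j` are bounded by some `i₀ < τ`, so
`X_{i₀+1} ⊆ ⋃ Y ⊆ X_{i₀}`, contradicting strict growth. Hence `τ ≤ τ'`, and `τ' ≤ τ` likewise.
-/

open Cardinal

universe u

open Order Set

variable {L : Type u}

theorem forall_exists_subset_of_iUnion_subset {κ : Cardinal.{u}} {J : Set L → L}
    {o o' : Ordinal.{u}} (ho : IsSuccLimit o) {Xs Ys : Ordinal.{u} → Set L}
    (hXcard : ∀ i < o, #(Xs i) ≤ κ) (hYmem : ∀ j < o', Ys j ∈ Pdash κ J)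
    (hXJ : ∀ i : Ordinal.{u}, i + 1 < o → J (Xs i) ∈ Xs (i + 1))
    (hXY : (⋃ i ∈ Iio o, Xs i) ⊆ ⋃ j ∈ Iio o', Ys j) :
    ∀ i < o, ∃ j < o', Xs i ⊆ Ys j := by
  intro i hi
  have hi' : i + 1 < o := ho.add_one_lt hi
  obtain ⟨j, hj, hJY⟩ := mem_iUnion₂.1 (hXY (mem_biUnion hi' (hXJ i hi')))
  exact ⟨j, hj, (hYmem j hj).2 (Xs i) (hXcard i hi) hJY⟩

theorem cof_le_card_of_iUnion_subset {o o' : Ordinal.{u}} (ho : IsSuccLimit o)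
    {Xs Ys : Ordinal.{u} → Set L} (hX : StrictMonoOn Xs (Iio o))
    (hYX : ∀ j < o', ∃ i < o, Ys j ⊆ Xs i)
    (hXY : (⋃ i ∈ Iio o, Xs i) ⊆ ⋃ j ∈ Iio o', Ys j) : o.cof ≤ o'.card := by
  by_contra! hlt
  choose f hf hYf using hYX
  set i₀ := ⨆ j : Iio o', f j j.2
  have hi₀ : i₀ < o := by
    refine Ordinal.lift_iSup_lt_of_lt_cof ?_ fun j ↦ hf j j.2
    rwa [mk_Iio_ordinal, ← Ordinal.lift_cof, lift_lift, lift_lt]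
  have hYi₀ : ∀ j < o', Ys j ⊆ Xs i₀ := fun j hj ↦
    (hYf j hj).trans <|
      hX.monotoneOn (hf j hj) hi₀ (Ordinal.le_iSup (fun j : Iio o' ↦ f j j.2) ⟨j, hj⟩)
  have hi₀' : i₀ + 1 < o := ho.add_one_lt hi₀
  have hsucc : Xs (i₀ + 1) ⊆ Xs i₀ := fun x hx ↦ by
    obtain ⟨j, hj, hxY⟩ := mem_iUnion₂.1 (hXY (mem_biUnion hi₀' hx))
    exact hYi₀ j hj hxY
  exact (hX hi₀ hi₀' (lt_add_one i₀)).not_ge hsucc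

theorem stmt18_general (κ lam : Cardinal.{u})
    (J : Set lam.ord.ToType → lam.ord.ToType)
    (τ τ' : Cardinal.{u}) (hτ : τ.IsRegular) (hτ' : τ'.IsRegular)
    (Xs Ys : Ordinal.{u} → Set lam.ord.ToType)
    (hXmem : ∀ i < τ.ord, Xs i ∈ Pdash κ J)
    (hYmem : ∀ j < τ'.ord, Ys j ∈ Pdash κ J)
    (hXinc : ∀ i j : Ordinal.{u}, i < j → j < τ.ord → Xs i ⊆ Xs j ∧ Xs i ≠ Xs j)
    (hYinc : ∀ i j : Ordinal.{u}, i < j → j < τ'.ord → Ys i ⊆ Ys j ∧ Ys i ≠ Ys j)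
    (hXJ : ∀ i : Ordinal.{u}, i + 1 < τ.ord → J (Xs i) ∈ Xs (i + 1))
    (hYJ : ∀ j : Ordinal.{u}, j + 1 < τ'.ord → J (Ys j) ∈ Ys (j + 1))
    (hunion : (⋃ i ∈ Set.Iio τ.ord, Xs i) = ⋃ j ∈ Set.Iio τ'.ord, Ys j) :
    (∀ i < τ.ord, ∃ j < τ'.ord, Xs i ⊆ Ys j) ∧
    (∀ j < τ'.ord, ∃ i < τ.ord, Ys j ⊆ Xs i) ∧
    τ = τ' := by
  have hlim := isSuccLimit_ord hτ.aleph0_le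
  have hlim' := isSuccLimit_ord hτ'.aleph0_le
  have hXmono : StrictMonoOn Xs (Iio τ.ord) := fun i _ j hj hij ↦
    ssubset_iff_subset_ne.2 (hXinc i j hij hj)
  have hYmono : StrictMonoOn Ys (Iio τ'.ord) := fun i _ j hj hij ↦
    ssubset_iff_subset_ne.2 (hYinc i j hij hj)
  have hXY := forall_exists_subset_of_iUnion_subset hlim (fun i hi ↦ (hXmem i hi).1) hYmem hXJ
    hunion.le
  have hYX := forall_exists_subset_of_iUnion_subset hlim' (fun j hj ↦ (hYmem j hj).1) hXmem hYJ
    hunion.ge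
  refine ⟨hXY, hYX, le_antisymm ?_ ?_⟩
  · simpa [hτ.cof_ord] using cof_le_card_of_iUnion_subset hlim hXmono hYX hunion.le
  · simpa [hτ'.cof_ord] using cof_le_card_of_iUnion_subset hlim' hYmono hXY hunion.ge

/-- If `τ, τ'` are infinite regular cardinals and `(X_i : i < τ)`, `(Y_j : j < τ')` are
strictly increasing sequences in `𝒫'_{κ⁺}(λ)` with `J (X_i) ∈ X_{i+1}`,
`J (Y_j) ∈ Y_{j+1}`, and with the same union, then the sequences are interleaved (every
`X_i` is contained in some `Y_j` and vice versa) and `τ = τ'`. Here `λ` is represented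
by the canonical type `lam.ord.toType` and `J` is a bijection from `𝒫_{κ⁺}(λ)` onto
`λ`. -/
theorem stmt18 (κ lam : Cardinal.{u}) (hκ : κ.IsRegular) (hlam : lam.IsRegular)
    (hkl : κ < lam) (hpow : κ ^< κ = κ) (h2κ : (2 : Cardinal.{u}) ^ κ = Order.succ κ)
    (hlκ : lam ^ κ = lam)
    (J : Set lam.ord.ToType → lam.ord.ToType)
    (hJ : Set.BijOn J {X : Set lam.ord.ToType | #X ≤ κ} Set.univ)
    (τ τ' : Cardinal.{u}) (hτ : τ.IsRegular) (hτ' : τ'.IsRegular)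
    (Xs Ys : Ordinal.{u} → Set lam.ord.ToType)
    (hXmem : ∀ i < τ.ord, Xs i ∈ Pdash κ J)
    (hYmem : ∀ j < τ'.ord, Ys j ∈ Pdash κ J)
    (hXinc : ∀ i j : Ordinal.{u}, i < j → j < τ.ord → Xs i ⊆ Xs j ∧ Xs i ≠ Xs j)
    (hYinc : ∀ i j : Ordinal.{u}, i < j → j < τ'.ord → Ys i ⊆ Ys j ∧ Ys i ≠ Ys j)
    (hXJ : ∀ i : Ordinal.{u}, i + 1 < τ.ord → J (Xs i) ∈ Xs (i + 1))
    (hYJ : ∀ j : Ordinal.{u}, j + 1 < τ'.ord → J (Ys j) ∈ Ys (j + 1))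
    (hunion : (⋃ i ∈ Set.Iio τ.ord, Xs i) = ⋃ j ∈ Set.Iio τ'.ord, Ys j) :
    (∀ i < τ.ord, ∃ j < τ'.ord, Xs i ⊆ Ys j) ∧
    (∀ j < τ'.ord, ∃ i < τ.ord, Ys j ⊆ Xs i) ∧
    τ = τ' :=
  stmt18_general κ lam J τ τ' hτ hτ' Xs Ys hXmem hYmem hXinc hYinc hXJ hYJ hunion
end

section
/- For every condition (X,F,g) of ℚ(κ⁺,λ,μ) and every ordinal β < λ, there exists a condition (X',F',g') of ℚ(κ⁺,λ,μ) with (X',F',g') ≤ (X,F,g) and β ∈ X'. -/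
open Cardinal

universe u

/-!
Enlarge `S = p.X ∪ {β, J p.X}` by repeatedly adding every `Y ∈ 𝒫_{κ⁺}(λ)` with `J Y` already
present. Since `J` is injective on `𝒫_{κ⁺}(λ)` and `κ` is infinite, each round adds at most `κ`
points, and after `ω`
rounds the union `X'` lies in `𝒫'_{κ⁺}(λ)`. Extending every function of `F` (and of `g`) by `0` on
`X' \ p.X` gives a condition below `p`, because `J p.X ∈ X'`. For `κ`-closedness: a function `f`
as in (d) vanishes off `p.X`, since every point lies in some `X_j` on which `f` agrees with an
extension by `0`; and `p.X ⊆ X_i` for the `i` with `J p.X ∈ X_i`, so `f ↾ p.X ∈ F`.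
-/

open Set

section Cardinal

variable {α : Type u} {κ : Cardinal.{u}}

theorem mk_sUnion_le_of_le (hκ : ℵ₀ ≤ κ) {A : Set (Set α)} (hA : #A ≤ κ)
    (h : ∀ s ∈ A, #s ≤ κ) : #(⋃₀ A) ≤ κ := by
  refine (mk_sUnion_le A).trans ?_
  calc #A * ⨆ s : A, #s.1 ≤ κ * κ := mul_le_mul' hA (ciSup_le' fun s => h s.1 s.2)
    _ = κ := mul_eq_self hκ

theorem mk_iUnion_nat_le (hκ : ℵ₀ ≤ κ) {f : ℕ → Set α} (h : ∀ n, #(f n) ≤ κ) :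
    #(⋃ n, f n) ≤ κ := by
  rw [← sUnion_range]
  exact mk_sUnion_le_of_le hκ ((countable_range f).le_aleph0.trans hκ)
    (forall_mem_range.2 h)

theorem mk_insert_le_of_le (hκ : ℵ₀ ≤ κ) {s : Set α} (hs : #s ≤ κ) (a : α) :
    #(insert a s : Set α) ≤ κ :=
  mk_insert_le.trans <| (add_le_add hs le_rfl).trans (add_one_eq hκ).le

end Cardinal

section Hull

variable {L : Type u} (κ : Cardinal.{u}) (J : Set L → L)

def pdashStep (S : Set L) : Set L :=
  S ∪ ⋃₀ {Y | #Y ≤ κ ∧ J Y ∈ S}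

def pdashHull (S : Set L) : Set L :=
  ⋃ n, (pdashStep κ J)^[n] S

variable {κ J}

theorem mk_pdashStep_le (hκ : ℵ₀ ≤ κ) (hJ : InjOn J {X | #X ≤ κ}) {S : Set L}
    (hS : #S ≤ κ) : #(pdashStep κ J S) ≤ κ := by
  have hpre : #{Y : Set L | #Y ≤ κ ∧ J Y ∈ S} ≤ κ := by
    rw [← mk_image_eq_of_injOn _ _ (hJ.mono fun _ hY => hY.1)]
    exact (mk_le_mk_of_subset (image_subset_iff.2 fun _ hY => hY.2)).trans hS
  exact (mk_union_le _ _).trans <| (add_eq_self hκ).le.trans' <|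
    add_le_add hS (mk_sUnion_le_of_le hκ hpre fun _ hY => hY.1)

theorem subset_pdashHull (S : Set L) : S ⊆ pdashHull κ J S :=
  subset_iUnion (fun n => (pdashStep κ J)^[n] S) 0

theorem mk_pdashHull_le (hκ : ℵ₀ ≤ κ) (hJ : InjOn J {X | #X ≤ κ}) {S : Set L}
    (hS : #S ≤ κ) : #(pdashHull κ J S) ≤ κ := by
  refine mk_iUnion_nat_le hκ fun n => ?_
  induction n with
  | zero => exact hS
  | succ n ih => rw [Function.iterate_succ_apply']; exact mk_pdashStep_le hκ hJ ih

theorem pdashHull_mem_Pdash (hκ : ℵ₀ ≤ κ) (hJ : InjOn J {X | #X ≤ κ}) {S : Set L}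
    (hS : #S ≤ κ) : pdashHull κ J S ∈ Pdash κ J := by
  refine ⟨mk_pdashHull_le hκ hJ hS, fun Y hY hJY => ?_⟩
  obtain ⟨n, hn⟩ := mem_iUnion.1 hJY
  have hYstep : Y ⊆ (pdashStep κ J)^[n + 1] S := by
    rw [Function.iterate_succ_apply']
    exact subset_union_right.trans' (subset_sUnion_of_mem ⟨hY, hn⟩)
  exact hYstep.trans (subset_iUnion (fun n => (pdashStep κ J)^[n] S) (n + 1))

end Hull

section Extension

variable {L Mu : Type u} {X Y : Set L}

open Classical in
noncomputable def extendByFalse (X : Set L) (t : ↥Y → Bool) : ↥X → Bool :=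
  fun a => if ha : a.1 ∈ Y then t ⟨a.1, ha⟩ else false

theorem restr_extendByFalse (h : Y ⊆ X) (t : ↥Y → Bool) : restr h (extendByFalse X t) = t :=
  funext fun a => by simp [restr, extendByFalse]

theorem extendByFalse_restr (h : Y ⊆ X) {f : ↥X → Bool} (hf : ∀ a : ↥X, a.1 ∉ Y → f a = false) :
    extendByFalse X (restr h f) = f :=
  funext fun a => by
    by_cases ha : a.1 ∈ Y
    · simp [extendByFalse, restr, ha]
    · simp [extendByFalse, ha, hf a ha]

noncomputable def QCond.extend (p : QCond L Mu) (X : Set L) : QCond L Mu :=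
  ⟨X, extendByFalse X '' p.F, fun γ => (p.g γ).map (extendByFalse X)⟩

variable {J : Set L → L}

theorem QCond.qle_extend (p : QCond L Mu) (h : p.X ⊆ X) (hJX : J p.X ∈ X) :
    QLE J (p.extend X) p := by
  refine ⟨Or.inr hJX, h, ?_, fun γ s hs => ⟨extendByFalse X s, by simp [extend, hs],
    restr_extendByFalse h s⟩⟩
  change restr h '' (extendByFalse X '' p.F) = p.F
  simp only [image_image, restr_extendByFalse, image_id']

theorem IsQCond.extend {κ : Cardinal.{u}} {p : QCond L Mu} (hp : IsQCond κ J p)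
    (hX : X ∈ Pdash κ J) (hJX : J p.X ∈ X) : IsQCond κ J (p.extend X) := by
  obtain ⟨⟨hXκ, -⟩, hFκ, hgF, hdom, -⟩ := hp
  have h : p.X ⊆ X := hX.2 p.X hXκ hJX
  refine ⟨hX, mk_image_le.trans hFκ, fun γ s hs => ?_, by simpa [QCond.extend] using hdom,
    fun _ τ _ _ Xs hXs _ _ hU (f : ↥X → Bool) hf => ?_⟩
  · obtain ⟨t, ht, rfl⟩ := Option.map_eq_some_iff.1 hs
    exact mem_image_of_mem _ (hgF γ t ht)
  change _ = X at hU
  have hcover : ∀ a ∈ X, ∃ i < τ.ord, a ∈ Xs i := fun a ha => by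
    rw [← hU] at ha
    simpa using ha
  have hsub : ∀ i < τ.ord, Xs i ⊆ X := fun i hi => hU ▸ subset_biUnion_of_mem (u := Xs) hi
  have hfalse : ∀ a : ↥X, a.1 ∉ p.X → f a = false := by
    intro a ha
    obtain ⟨j, hj, haj⟩ := hcover a a.2
    obtain ⟨_, ⟨t, -, rfl⟩, hft⟩ := hf j hj (hsub j hj)
    have hfa := congrFun hft ⟨a, haj⟩
    simp only [restr, extendByFalse, dif_neg ha] at hfa
    exact hfa.symm
  obtain ⟨i, hi, hJi⟩ := hcover _ hJX
  have hpi : p.X ⊆ Xs i := (hXs i hi).2 p.X hXκ hJi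
  obtain ⟨_, ⟨t, ht, rfl⟩, hft⟩ := hf i hi (hsub i hi)
  have hft' : restr h f = t := calc
    restr h f = restr hpi (restr (hsub i hi) f) := rfl
    _ = restr hpi (restr (hsub i hi) (extendByFalse X t)) := congrArg (restr hpi) hft.symm
    _ = t := restr_extendByFalse h t
  exact ⟨t, ht, hft' ▸ extendByFalse_restr h hfalse⟩

end Extension

theorem stmt19_general (κ lam μ : Cardinal.{u}) (hκ : κ.IsRegular)
    (J : Set lam.ord.ToType → lam.ord.ToType)
    (hJ : Set.BijOn J {X : Set lam.ord.ToType | #X ≤ κ} Set.univ)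
    (p : QCond lam.ord.ToType μ.ord.ToType) (hp : IsQCond κ J p)
    (β : lam.ord.ToType) :
    ∃ q : QCond lam.ord.ToType μ.ord.ToType,
      IsQCond κ J q ∧ QLE J q p ∧ β ∈ q.X := by
  have hκ₀ : ℵ₀ ≤ κ := hκ.aleph0_le
  set S := insert β (insert (J p.X) p.X)
  have hS : #S ≤ κ := mk_insert_le_of_le hκ₀ (mk_insert_le_of_le hκ₀ hp.1.1 _) _
  have hSX : S ⊆ pdashHull κ J S := subset_pdashHull S
  have hJX : J p.X ∈ pdashHull κ J S := hSX (mem_insert_of_mem _ (mem_insert _ _))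
  have hpX : p.X ⊆ pdashHull κ J S := (subset_insert _ _).trans ((subset_insert _ _).trans hSX)
  exact ⟨p.extend _, hp.extend (pdashHull_mem_Pdash hκ₀ hJ.injOn hS) hJX,
    p.qle_extend hpX hJX, hSX (mem_insert _ _)⟩

/-- Every condition of `ℚ(κ⁺,λ,μ)` can be extended to one whose first coordinate
contains any prescribed `β < λ`. Here `λ` and `μ` are represented by the canonical types
`lam.ord.toType` and `μ.ord.toType`, and `J` is a bijection from `𝒫_{κ⁺}(λ)` onto `λ`. -/
theorem stmt19 (κ lam μ : Cardinal.{u}) (hκ : κ.IsRegular) (hlam : lam.IsRegular)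
    (hkl : κ < lam) (hpow : κ ^< κ = κ) (h2κ : (2 : Cardinal.{u}) ^ κ = Order.succ κ)
    (hlκ : lam ^ κ = lam)
    (J : Set lam.ord.ToType → lam.ord.ToType)
    (hJ : Set.BijOn J {X : Set lam.ord.ToType | #X ≤ κ} Set.univ)
    (p : QCond lam.ord.ToType μ.ord.ToType) (hp : IsQCond κ J p)
    (β : lam.ord.ToType) :
    ∃ q : QCond lam.ord.ToType μ.ord.ToType,
      IsQCond κ J q ∧ QLE J q p ∧ β ∈ q.X :=
  stmt19_general κ lam μ hκ J hJ p hp β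
end
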